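/- arXiv:1603.01550 — 10 statements merged into one kernel-verified Lean document; each statement's English description precedes it below -/
import Mathlib

section
/- Any injective monoid homomorphism ξ : M → E which fixes every element of G also fixes every member of Γ ∪ Γ⁺ ∪ Γ⁻ ∪ Γ±, i.e. ξ(g) = g for all g ∈ Γ ∪ Γ⁺ ∪ Γ⁻ ∪ Γ±. -/
/-- The monoid `M` of strictly order-preserving maps `ℚ → ℚ`
(self-embeddings of `(ℚ,<)`), a submonoid of `Tr(ℚ) = Function.End ℚ`. -/
def Mmon : Submonoid (Function.End ℚ) where
  carrier := {f | StrictMono f}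
  mul_mem' := fun hf hg => hf.comp hg
  one_mem' := strictMono_id

/-- The monoid `E` of order-preserving maps `ℚ → ℚ` (endomorphisms of `(ℚ,≤)`),
a submonoid of `Tr(ℚ) = Function.End ℚ`. -/
def Emon : Submonoid (Function.End ℚ) where
  carrier := {f | Monotone f}
  mul_mem' := fun hf hg => hf.comp hg
  one_mem' := monotone_id

/-- `z` lies strictly between `x` and `y`. -/
def StrictlyBetween (x y z : ℚ) : Prop := (x < z ∧ z < y) ∨ (y < z ∧ z < x)

/-- The equivalence relation `∼` associated with `g`: at most one point of `im(g)`
lies strictly between `x` and `y`. -/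
def SimRel (g : ℚ → ℚ) (x y : ℚ) : Prop :=
  {z | z ∈ Set.range g ∧ StrictlyBetween x y z}.Subsingleton

/-- The `∼`-class of `x` is red, i.e. meets `im(g)`. -/
def RedPt (g : ℚ → ℚ) (x : ℚ) : Prop := ∃ y ∈ Set.range g, SimRel g x y

/-- A colouring of `ℚ` in which both colours are dense (this makes `(ℚ, R)` a copy of
the 2-coloured rationals `ℚ₂`, `R q` meaning "`q` is red"). -/
def DenseColouring (R : ℚ → Prop) : Prop :=
  ∀ x y : ℚ, x < y → (∃ z, x < z ∧ z < y ∧ R z) ∧ (∃ z, x < z ∧ z < y ∧ ¬ R z)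

/-- `ℚ` decomposes as a disjoint increasing union of convex subsets `A q`, `q` in the
linearly ordered index set `ι` with red points given by `R`, each `A q` order-isomorphic
to `ℚ`, where `A q` meets `im(f)` in exactly one point if `q` is red and is disjoint from
`im(f)` if `q` is blue. -/
def Decomp (ι : Type) [LinearOrder ι] (R : ι → Prop) (f : ℚ → ℚ) : Prop :=
  ∃ A : ι → Set ℚ,
    (∀ x : ℚ, ∃! q : ι, x ∈ A q) ∧
    (∀ q r : ι, q < r → ∀ a ∈ A q, ∀ b ∈ A r, a < b) ∧
    (∀ q : ι, (A q).OrdConnected) ∧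
    (∀ q : ι, Nonempty ((A q) ≃o ℚ)) ∧
    (∀ q : ι, R q → ∃! y : ℚ, y ∈ A q ∩ Set.range f) ∧
    (∀ q : ι, ¬ R q → A q ∩ Set.range f = ∅)

/-- The family `Γ`. -/
def Gamma (f : ℚ → ℚ) : Prop :=
  StrictMono f ∧ ∃ R : ℚ → Prop, DenseColouring R ∧ Decomp ℚ R f

/-- The family `Γ⁺` (index set `ℚ₂ ∪ {+∞}`, the added point coloured blue). -/
def GammaP (f : ℚ → ℚ) : Prop :=
  StrictMono f ∧ ∃ R : ℚ → Prop, DenseColouring R ∧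
    Decomp (WithTop ℚ) (fun q => ∃ p : ℚ, q = (p : WithTop ℚ) ∧ R p) f

/-- The family `Γ⁻` (index set `ℚ₂ ∪ {−∞}`, the added point coloured blue). -/
def GammaM (f : ℚ → ℚ) : Prop :=
  StrictMono f ∧ ∃ R : ℚ → Prop, DenseColouring R ∧
    Decomp (WithBot ℚ) (fun q => ∃ p : ℚ, q = (p : WithBot ℚ) ∧ R p) f

/-- The family `Γ±` (index set `ℚ₂ ∪ {−∞, +∞}`, the added points coloured blue). -/
def GammaPM (f : ℚ → ℚ) : Prop :=
  StrictMono f ∧ ∃ R : ℚ → Prop, DenseColouring R ∧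
    Decomp (WithBot (WithTop ℚ))
      (fun q => ∃ p : ℚ, q = ((p : WithTop ℚ) : WithBot (WithTop ℚ)) ∧ R p) f

/-!
Write `h = ξ g`. Whenever automorphisms `a`, `c` of `ℚ` satisfy `a ∘ g = g ∘ c`, applying `ξ`
gives `a ∘ h = h ∘ c`, and the block structure of `g` supplies many such pairs. Taking `c = id`:
a point `x ∉ im g` can be moved by an automorphism acting inside the block of `x`, where it fixes
the at most one point of `im g`; so `x ∉ im h`, i.e. `im h ⊆ im g`. In general, permuting the
blocks by a colour-preserving automorphism of the index set that fixes the block of `g z` but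
moves the block of `g u`, and matching the marked points of the blocks, gives a pair with
`c z = z` and `c u ≠ u`. If `h z = g u` then `g (c u) = a (h z) = h (c z) = g u`, so `u = z`.
The colour-preserving automorphisms of `ℚ₂` needed here come from a back-and-forth argument.
-/

open Function Set

section OrderIsoOfRat

variable {α β : Type*} [LinearOrder α] [LinearOrder β]

lemma exists_orderIso_fix_move (e : α ≃o ℚ) {m x : α} (h : x ≠ m) :
    ∃ σ : α ≃o α, σ m = m ∧ σ x ≠ x := by
  -- conjugate the homothety `t ↦ 2 t - e m`, whose only fixed point is `e m`
  let τ : ℚ ≃o ℚ := (OrderIso.mulLeft₀ 2 two_pos).trans (OrderIso.addRight (-e m))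
  refine ⟨e.trans (τ.trans e.symm), ?_, ?_⟩
  · simp [τ, two_mul]
  · have : e x ≠ e m := e.injective.ne h
    simp only [τ, OrderIso.trans_apply, OrderIso.mulLeft₀_apply, OrderIso.addRight_apply, ne_eq,
      OrderIso.symm_apply_eq]
    exact fun h' => this (by linarith)

lemma exists_orderIso_apply_eq (eα : α ≃o ℚ) (eβ : β ≃o ℚ) (x : α) (y : β) :
    ∃ ψ : α ≃o β, ψ x = y :=
  ⟨eα.trans ((OrderIso.addRight (eβ y - eα x)).trans eβ.symm), by simp⟩

lemma exists_orderIso_fix_move_of_subsingleton (e : α ≃o ℚ) {S : Set α} (hS : S.Subsingleton)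
    {x : α} (hx : x ∉ S) : ∃ σ : α ≃o α, (∀ u ∈ S, σ u = u) ∧ σ x ≠ x := by
  rcases S.eq_empty_or_nonempty with rfl | ⟨m, hm⟩
  · have : Nontrivial α := e.toEquiv.nontrivial
    obtain ⟨m, hm⟩ := exists_ne x
    obtain ⟨σ, -, hσx⟩ := exists_orderIso_fix_move e hm.symm
    exact ⟨σ, by simp, hσx⟩
  · obtain ⟨σ, hσm, hσx⟩ := exists_orderIso_fix_move e (ne_of_mem_of_not_mem hm hx).symm
    exact ⟨σ, fun u hu => hS hu hm ▸ hσm, hσx⟩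

lemma exists_orderIso_preimage_eq (eα : α ≃o ℚ) (eβ : β ≃o ℚ) {S : Set α} {T : Set β}
    (hS : S.Subsingleton) (hT : T.Subsingleton) (hST : S.Nonempty ↔ T.Nonempty) :
    ∃ ψ : α ≃o β, ψ ⁻¹' T = S := by
  rcases S.eq_empty_or_nonempty with rfl | ⟨y, hy⟩
  · rw [not_nonempty_iff_eq_empty.mp (hST.not.mp not_nonempty_empty)]
    exact ⟨eα.trans eβ.symm, preimage_empty⟩
  · obtain ⟨y', hy'⟩ := hST.mp ⟨y, hy⟩
    obtain ⟨ψ, hψ⟩ := exists_orderIso_apply_eq eα eβ y y'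
    refine ⟨ψ, ?_⟩
    rw [hS.eq_singleton_of_mem hy, hT.eq_singleton_of_mem hy', ← hψ]
    ext u
    simp

end OrderIsoOfRat

lemma StrictMono.exists_orderIso_semiconj {α β : Type*} [LinearOrder α] [LinearOrder β]
    {f : α → β} (hf : StrictMono f) (a : β ≃o β) (ha : a ⁻¹' range f = range f) :
    ∃ c : α ≃o α, ∀ z, a (f z) = f (c z) := by
  have hmem : ∀ z, a (f z) ∈ range f := fun z => (Set.ext_iff.mp ha (f z)).mpr ⟨z, rfl⟩
  choose c hc using hmem
  have hcmono : StrictMono c := fun u v huv => hf.lt_iff_lt.mp (by simpa [hc] using hf huv)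
  have hcsurj : Surjective c := by
    intro w
    obtain ⟨z, hz⟩ : a.symm (f w) ∈ range f := (Set.ext_iff.mp ha _).mp (by simp)
    exact ⟨z, hf.injective (by rw [hc, hz, a.apply_symm_apply])⟩
  exact ⟨hcmono.orderIsoOfSurjective c hcsurj, fun z => (hc z).symm⟩

structure IsOrderedPartition {α ι : Type*} [LinearOrder α] [LinearOrder ι] (A : ι → Set α) :
    Prop where
  existsUnique_mem : ∀ x, ∃! q, x ∈ A q
  lt_of_lt : ∀ q r, q < r → ∀ a ∈ A q, ∀ b ∈ A r, a < b

namespace IsOrderedPartition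

variable {α ι : Type*} [LinearOrder α] [LinearOrder ι] {A : ι → Set α}

lemma eq_of_mem (hA : IsOrderedPartition A) {x : α} {q r : ι} (hq : x ∈ A q) (hr : x ∈ A r) :
    q = r :=
  (hA.existsUnique_mem x).unique hq hr

lemma exists_orderIso_glue (hA : IsOrderedPartition A) (γ : ι ≃o ι)
    (ψ : ∀ q, A q ≃o A (γ q)) :
    ∃ a : α ≃o α, ∀ q x (hx : x ∈ A q), a x = ψ q ⟨x, hx⟩ := by
  choose blk hblk using fun x => (hA.existsUnique_mem x).exists
  let a : α → α := fun x => ψ (blk x) ⟨x, hblk x⟩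
  have ha : ∀ q x (hx : x ∈ A q), a x = ψ q ⟨x, hx⟩ := by
    intro q x hx
    obtain rfl := hA.eq_of_mem (hblk x) hx
    rfl
  have hmaps : ∀ x, a x ∈ A (γ (blk x)) := fun x => (ψ (blk x) _).2
  have hmono : StrictMono a := by
    intro x y hxy
    rcases lt_trichotomy (blk x) (blk y) with h | h | h
    · exact hA.lt_of_lt _ _ (γ.strictMono h) _ (hmaps x) _ (hmaps y)
    · have hy : y ∈ A (blk x) := h ▸ hblk y
      rw [ha _ y hy]
      exact (ψ (blk x)).strictMono (show (⟨x, hblk x⟩ : A (blk x)) < ⟨y, hy⟩ from hxy)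
    · exact absurd (hA.lt_of_lt _ _ h y (hblk y) x (hblk x)) hxy.not_gt
  have hsurj : Surjective a := by
    intro w
    have hw : w ∈ A (γ (γ.symm (blk w))) := by simpa using hblk w
    refine ⟨(ψ _).symm ⟨w, hw⟩, ?_⟩
    rw [ha _ _ (Subtype.prop _)]
    simp
  exact ⟨hmono.orderIsoOfSurjective a hsurj, ha⟩

end IsOrderedPartition

def SeparatesRedPoints {ι : Type*} [LinearOrder ι] (R : ι → Prop) : Prop :=
  ∀ q₀ q₁, R q₀ → R q₁ → q₀ ≠ q₁ →
    ∃ γ : ι ≃o ι, (∀ q, R (γ q) ↔ R q) ∧ γ q₀ = q₀ ∧ γ q₁ ≠ q₁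

section SeparatesRedPoints

variable {ι : Type*} [LinearOrder ι] {R : ι → Prop}

lemma SeparatesRedPoints.withTop {R' : WithTop ι → Prop} (hR : SeparatesRedPoints R)
    (hcoe : ∀ p : ι, R' p ↔ R p) (htop : ¬ R' ⊤) : SeparatesRedPoints R' := by
  intro q₀ q₁ h₀ h₁ hne
  lift q₀ to ι using ne_of_apply_ne R' fun h => htop (h ▸ h₀) with p₀
  lift q₁ to ι using ne_of_apply_ne R' fun h => htop (h ▸ h₁) with p₁
  obtain ⟨γ, hγR, hγ₀, hγ₁⟩ :=
    hR p₀ p₁ ((hcoe p₀).1 h₀) ((hcoe p₁).1 h₁) (fun h => hne (congrArg _ h))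
  refine ⟨γ.withTopCongr, fun q => ?_, by simp [hγ₀], by simpa using hγ₁⟩
  induction q using WithTop.recTopCoe with
  | top => simp
  | coe p => simpa [hcoe] using hγR p

lemma SeparatesRedPoints.withBot {R' : WithBot ι → Prop} (hR : SeparatesRedPoints R)
    (hcoe : ∀ p : ι, R' p ↔ R p) (hbot : ¬ R' ⊥) : SeparatesRedPoints R' := by
  intro q₀ q₁ h₀ h₁ hne
  lift q₀ to ι using ne_of_apply_ne R' fun h => hbot (h ▸ h₀) with p₀
  lift q₁ to ι using ne_of_apply_ne R' fun h => hbot (h ▸ h₁) with p₁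
  obtain ⟨γ, hγR, hγ₀, hγ₁⟩ :=
    hR p₀ p₁ ((hcoe p₀).1 h₀) ((hcoe p₁).1 h₁) (fun h => hne (congrArg _ h))
  refine ⟨γ.withBotCongr, fun q => ?_, by simp [hγ₀], by simpa using hγ₁⟩
  induction q using WithBot.recBotCoe with
  | bot => simp
  | coe p => simpa [hcoe] using hγR p

end SeparatesRedPoints

namespace DenseColouring

variable {R : ℚ → Prop}

lemma exists_between_iff (hR : DenseColouring R) {a b : ℚ} (hab : a < b) (x : ℚ) :
    ∃ z, a < z ∧ z < b ∧ (R z ↔ R x) := by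
  by_cases hx : R x
  · obtain ⟨z, h₁, h₂, hz⟩ := (hR a b hab).1
    exact ⟨z, h₁, h₂, iff_of_true hz hx⟩
  · obtain ⟨z, h₁, h₂, hz⟩ := (hR a b hab).2
    exact ⟨z, h₁, h₂, iff_of_false hz hx⟩

lemma exists_between_finsets (hR : DenseColouring R) (lo hi : Finset ℚ)
    (h : ∀ a ∈ lo, ∀ b ∈ hi, a < b) (x : ℚ) :
    ∃ z, (R z ↔ R x) ∧ (∀ a ∈ lo, a < z) ∧ ∀ b ∈ hi, z < b := by
  obtain ⟨m₁, hlo₁, hhi₁⟩ := Order.exists_between_finsets lo hi h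
  obtain ⟨m₂, hlo₂, hhi₂⟩ := Order.exists_between_finsets (insert m₁ lo) hi
    (by simpa [Finset.forall_mem_insert] using ⟨hhi₁, h⟩)
  have hm : m₁ < m₂ := hlo₂ m₁ (Finset.mem_insert_self _ _)
  obtain ⟨z, hz₁, hz₂, hz⟩ := hR.exists_between_iff hm x
  exact ⟨z, hz, fun a ha => (hlo₁ a ha).trans hz₁, fun b hb => hz₂.trans (hhi₂ b hb)⟩

end DenseColouring

def IsColourPartialIso (R : ℚ → Prop) (s : Finset (ℚ × ℚ)) : Prop :=
  (∀ p ∈ s, R p.1 ↔ R p.2) ∧ ∀ p ∈ s, ∀ p' ∈ s, cmp p.1 p'.1 = cmp p.2 p'.2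

namespace IsColourPartialIso

variable {R : ℚ → Prop} {s : Finset (ℚ × ℚ)}

lemma empty : IsColourPartialIso R ∅ := by
  simp [IsColourPartialIso]

lemma insert_of_cmp_eq (hs : IsColourPartialIso R s) {x y : ℚ} (hxy : R x ↔ R y)
    (hcmp : ∀ p ∈ s, cmp p.1 x = cmp p.2 y) : IsColourPartialIso R (insert (x, y) s) := by
  refine ⟨(Finset.forall_mem_insert _ _ _).mpr ⟨hxy, hs.1⟩, ?_⟩
  simp only [Finset.forall_mem_insert, cmp_self_eq_eq, true_and]
  refine ⟨fun p hp => ?_, fun p hp => ⟨hcmp p hp, hs.2 p hp⟩⟩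
  rw [← cmp_swap, hcmp p hp, cmp_swap]

lemma image_swap (hs : IsColourPartialIso R s) : IsColourPartialIso R (s.image Prod.swap) := by
  simp only [IsColourPartialIso, Finset.forall_mem_image, Prod.fst_swap, Prod.snd_swap]
  exact ⟨fun p hp => (hs.1 p hp).symm, fun p hp p' hp' => (hs.2 p hp p' hp').symm⟩

lemma exists_insert_left (hR : DenseColouring R) (hs : IsColourPartialIso R s) (x : ℚ) :
    ∃ y, IsColourPartialIso R (insert (x, y) s) := by
  by_cases hx : ∃ y, (x, y) ∈ s
  · obtain ⟨y, hy⟩ := hx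
    exact ⟨y, by rwa [Finset.insert_eq_of_mem hy]⟩
  obtain ⟨y, hRy, hlo, hhi⟩ := hR.exists_between_finsets
    ((s.filter (·.1 < x)).image Prod.snd) ((s.filter (x < ·.1)).image Prod.snd)
    (by
      simp only [Finset.forall_mem_image, Finset.mem_filter, and_imp]
      intro p hp hpx p' hp' hxp'
      exact (lt_iff_lt_of_cmp_eq_cmp (hs.2 p hp p' hp')).mp (hpx.trans hxp')) x
  refine ⟨y, hs.insert_of_cmp_eq hRy.symm fun p hp => ?_⟩
  rcases lt_or_gt_of_ne fun h : p.1 = x => hx ⟨p.2, by rwa [← h]⟩ with h | h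
  · have hpy := hlo _ (Finset.mem_image_of_mem _ (Finset.mem_filter.mpr ⟨hp, h⟩))
    rw [(cmp_eq_lt_iff _ _).mpr h, (cmp_eq_lt_iff _ _).mpr hpy]
  · have hpy := hhi _ (Finset.mem_image_of_mem _ (Finset.mem_filter.mpr ⟨hp, h⟩))
    rw [(cmp_eq_gt_iff _ _).mpr h, (cmp_eq_gt_iff _ _).mpr hpy]

lemma exists_insert_right (hR : DenseColouring R) (hs : IsColourPartialIso R s) (y : ℚ) :
    ∃ x, IsColourPartialIso R (insert (x, y) s) := by
  obtain ⟨x, hx⟩ := hs.image_swap.exists_insert_left hR y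
  refine ⟨x, ?_⟩
  simpa [Finset.image_insert, Finset.image_image] using hx.image_swap

end IsColourPartialIso

namespace DenseColouring

variable {R : ℚ → Prop}

def definedAt (hR : DenseColouring R) (x : ℚ) : Order.Cofinal {s // IsColourPartialIso R s} where
  carrier := {s | (∃ y, (x, y) ∈ s.1) ∧ ∃ z, (z, x) ∈ s.1}
  isCofinal s := by
    obtain ⟨y, hy⟩ := s.2.exists_insert_left hR x
    obtain ⟨z, hz⟩ := hy.exists_insert_right hR x
    exact ⟨⟨_, hz⟩, ⟨⟨y, by simp⟩, ⟨z, by simp⟩⟩, fun p hp => by simp [hp]⟩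

lemma exists_orderIso_extend (hR : DenseColouring R) {s : Finset (ℚ × ℚ)}
    (hs : IsColourPartialIso R s) :
    ∃ β : ℚ ≃o ℚ, (∀ p, R (β p) ↔ R p) ∧ ∀ p ∈ s, β p.1 = p.2 := by
  let I := Order.idealOfCofinals ⟨s, hs⟩ hR.definedAt
  have hcmp : ∀ t ∈ I, ∀ t' ∈ I, ∀ p ∈ t.1, ∀ p' ∈ t'.1, cmp p.1 p'.1 = cmp p.2 p'.2 := by
    intro t ht t' ht' p hp p' hp'
    obtain ⟨u, -, htu, ht'u⟩ := I.directed t ht t' ht'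
    exact u.2.2 p (htu hp) p' (ht'u hp')
  have hdef x := Order.cofinal_meets_idealOfCofinals ⟨s, hs⟩ hR.definedAt x
  choose t ht htI using hdef
  choose F hF using fun x => (ht x).1
  choose G hG using fun x => (ht x).2
  refine ⟨OrderIso.ofCmpEqCmp F G fun a b => hcmp _ (htI a) _ (htI b) _ (hF a) _ (hG b),
    fun p => ((t p).2.1 _ (hF p)).symm, fun p hp => ?_⟩
  have := hcmp _ (htI p.1) _ (Order.mem_idealOfCofinals _ _) _ (hF p.1) _ hp
  rwa [cmp_self_eq_eq, eq_comm, cmp_eq_eq_iff] at this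

lemma separatesRedPoints (hR : DenseColouring R) : SeparatesRedPoints R := by
  intro p₀ p₁ _ _ hne
  obtain ⟨t, htp, hRt, hcmp⟩ : ∃ t, t ≠ p₁ ∧ (R t ↔ R p₁) ∧ cmp p₀ t = cmp p₀ p₁ := by
    rcases hne.lt_or_gt with h | h
    · obtain ⟨t, h₁, -, ht⟩ := hR.exists_between_iff (lt_add_one p₁) p₁
      exact ⟨t, h₁.ne', ht, by rw [(cmp_eq_lt_iff _ _).mpr h, (cmp_eq_lt_iff _ _).mpr (h.trans h₁)]⟩
    · obtain ⟨t, -, h₂, ht⟩ := hR.exists_between_iff (sub_one_lt p₁) p₁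
      exact ⟨t, h₂.ne, ht, by rw [(cmp_eq_gt_iff _ _).mpr h, (cmp_eq_gt_iff _ _).mpr (h₂.trans h)]⟩
  have hs : IsColourPartialIso R (insert (p₁, t) (insert (p₀, p₀) ∅)) :=
    (IsColourPartialIso.empty.insert_of_cmp_eq Iff.rfl (by simp)).insert_of_cmp_eq hRt.symm
      (by simpa using hcmp.symm)
  obtain ⟨β, hβR, hβ⟩ := hR.exists_orderIso_extend hs
  exact ⟨β, hβR, hβ (p₀, p₀) (by simp), by rw [hβ (p₁, t) (by simp)]; exact htp⟩

end DenseColouring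

namespace IsOrderedPartition

variable {ι : Type*} [LinearOrder ι] {A : ι → Set ℚ} {f : ℚ → ℚ}

lemma exists_orderIso_fix_range_move (hA : IsOrderedPartition A)
    (hiso : ∀ q, Nonempty (A q ≃o ℚ)) (hsub : ∀ q, (A q ∩ range f).Subsingleton) {x : ℚ}
    (hx : x ∉ range f) : ∃ a : ℚ ≃o ℚ, (∀ z, a (f z) = f z) ∧ a x ≠ x := by
  obtain ⟨q, hxq, -⟩ := hA.existsUnique_mem x
  obtain ⟨σ, hσfix, hσx⟩ := exists_orderIso_fix_move_of_subsingleton (hiso q).some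
    (S := ((↑) : A q → ℚ) ⁻¹' range f)
    (((hsub q).preimage Subtype.val_injective).anti fun u hu => ⟨u.2, hu⟩)
    (x := ⟨x, hxq⟩) hx
  let ψ : ∀ r, A r ≃o A r := fun r => if h : r = q then h ▸ σ else OrderIso.refl _
  obtain ⟨a, ha⟩ := hA.exists_orderIso_glue (OrderIso.refl ι) ψ
  refine ⟨a, fun z => ?_, ?_⟩
  · obtain ⟨r, hr, -⟩ := hA.existsUnique_mem (f z)
    rw [ha r _ hr]
    change ((ψ r ⟨f z, hr⟩ : A r) : ℚ) = f z
    by_cases h : r = q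
    · subst h
      simpa [ψ] using congrArg Subtype.val (hσfix ⟨f z, hr⟩ ⟨z, rfl⟩)
    · simp [ψ, h]
  · rw [ha q x hxq]
    change ((ψ q ⟨x, hxq⟩ : A q) : ℚ) ≠ x
    simpa [ψ] using fun h => hσx (Subtype.ext h)

lemma exists_orderIso_semiconj_fix_move (hA : IsOrderedPartition A)
    (hiso : ∀ q, Nonempty (A q ≃o ℚ)) (hf : StrictMono f)
    (hsub : ∀ q, (A q ∩ range f).Subsingleton) {R : ι → Prop}
    (hred : ∀ q, R q ↔ (A q ∩ range f).Nonempty) (hR : SeparatesRedPoints R) {x y : ℚ}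
    (hxy : x ≠ y) : ∃ a c : ℚ ≃o ℚ, (∀ z, a (f z) = f (c z)) ∧ c x = x ∧ c y ≠ y := by
  obtain ⟨q₀, hq₀, -⟩ := hA.existsUnique_mem (f x)
  obtain ⟨q₁, hq₁, -⟩ := hA.existsUnique_mem (f y)
  have hq : q₀ ≠ q₁ := by
    rintro rfl
    exact hxy (hf.injective (hsub q₀ ⟨hq₀, x, rfl⟩ ⟨hq₁, y, rfl⟩))
  obtain ⟨γ, hγR, hγ₀, hγ₁⟩ :=
    hR q₀ q₁ ((hred q₀).2 ⟨_, hq₀, x, rfl⟩) ((hred q₁).2 ⟨_, hq₁, y, rfl⟩) hq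
  have hS : ∀ q, (((↑) : A q → ℚ) ⁻¹' range f).Subsingleton := fun q =>
    ((hsub q).preimage Subtype.val_injective).anti fun u hu => ⟨u.2, hu⟩
  have hψ : ∀ q, ∃ ψ : A q ≃o A (γ q), ψ ⁻¹' ((↑) ⁻¹' range f) = (↑) ⁻¹' range f := fun q =>
    exists_orderIso_preimage_eq (hiso q).some (hiso (γ q)).some (hS q) (hS (γ q))
      (by simp only [Subtype.preimage_coe_nonempty, ← hred, hγR])
  choose ψ hψ using hψ
  obtain ⟨a, ha⟩ := hA.exists_orderIso_glue γ ψ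
  have hmaps : ∀ q w, w ∈ A q → a w ∈ A (γ q) := fun q w hw => ha q w hw ▸ (ψ q _).2
  have hrange : a ⁻¹' range f = range f := by
    ext w
    obtain ⟨q, hw, -⟩ := hA.existsUnique_mem w
    rw [mem_preimage, ha q w hw]
    exact Set.ext_iff.mp (hψ q) ⟨w, hw⟩
  obtain ⟨c, hc⟩ := hf.exists_orderIso_semiconj a hrange
  refine ⟨a, c, hc, hf.injective ?_, fun hcy => hγ₁ ?_⟩
  · refine hsub q₀ ⟨?_, c x, rfl⟩ ⟨hq₀, x, rfl⟩
    simpa [hc, hγ₀] using hmaps q₀ _ hq₀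
  · have := hmaps q₁ _ hq₁
    rw [hc, hcy] at this
    exact hA.eq_of_mem this hq₁

end IsOrderedPartition

def Mmon.ofOrderIso (σ : ℚ ≃o ℚ) : Mmon := ⟨⇑σ, σ.strictMono⟩

lemma map_semiconj (ξ : Mmon →* Emon)
    (hfix : ∀ f : Mmon, Bijective (f : Function.End ℚ) →
      (ξ f : Function.End ℚ) = (f : Function.End ℚ))
    {g : Mmon} {a c : ℚ ≃o ℚ}
    (h : ∀ z, a ((g : Function.End ℚ) z) = (g : Function.End ℚ) (c z)) (z : ℚ) :
    a ((ξ g : Function.End ℚ) z) = (ξ g : Function.End ℚ) (c z) := by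
  have hg : Mmon.ofOrderIso a * g = g * Mmon.ofOrderIso c := Subtype.ext (funext h)
  have := congrArg (fun m => (ξ m : Function.End ℚ)) hg
  simp only [map_mul, Submonoid.coe_mul, hfix (Mmon.ofOrderIso a) a.bijective,
    hfix (Mmon.ofOrderIso c) c.bijective] at this
  exact congrFun this z

lemma eq_of_forall_semiconj (ξ : Mmon →* Emon)
    (hfix : ∀ f : Mmon, Bijective (f : Function.End ℚ) →
      (ξ f : Function.End ℚ) = (f : Function.End ℚ))
    (g : Mmon)
    (hrange : ∀ x ∉ range (g : Function.End ℚ),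
      ∃ a : ℚ ≃o ℚ, (∀ z, a ((g : Function.End ℚ) z) = (g : Function.End ℚ) z) ∧ a x ≠ x)
    (hmove : ∀ x y : ℚ, x ≠ y → ∃ a c : ℚ ≃o ℚ,
      (∀ z, a ((g : Function.End ℚ) z) = (g : Function.End ℚ) (c z)) ∧ c x = x ∧ c y ≠ y) :
    (ξ g : Function.End ℚ) = (g : Function.End ℚ) := by
  have hsub : ∀ z, (ξ g : Function.End ℚ) z ∈ range (g : Function.End ℚ) := by
    intro z
    by_contra hz
    obtain ⟨a, hag, hax⟩ := hrange _ hz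
    exact hax (map_semiconj ξ hfix (c := OrderIso.refl ℚ) hag z)
  funext z
  obtain ⟨u, hu⟩ := hsub z
  rw [← hu]
  by_contra hne
  obtain ⟨a, c, hac, hcz, hcu⟩ := hmove z u fun h => hne (congrArg _ h.symm)
  refine hcu (g.2.injective ?_)
  calc (g : Function.End ℚ) (c u) = a ((ξ g : Function.End ℚ) z) := by rw [← hac, hu]
    _ = (ξ g : Function.End ℚ) z := by rw [map_semiconj ξ hfix hac, hcz]
    _ = (g : Function.End ℚ) u := hu.symm

lemma eq_of_decomp (ξ : Mmon →* Emon)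
    (hfix : ∀ f : Mmon, Bijective (f : Function.End ℚ) →
      (ξ f : Function.End ℚ) = (f : Function.End ℚ))
    (g : Mmon) {ι : Type} [LinearOrder ι] {R : ι → Prop} (hR : SeparatesRedPoints R)
    (hdec : Decomp ι R (g : Function.End ℚ)) :
    (ξ g : Function.End ℚ) = (g : Function.End ℚ) := by
  obtain ⟨A, hcover, hlt, -, hiso, hred, hblue⟩ := hdec
  have hA : IsOrderedPartition A := ⟨hcover, hlt⟩
  have hsub : ∀ q, (A q ∩ range (g : Function.End ℚ)).Subsingleton := by
    intro q
    by_cases hq : R q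
    · obtain ⟨y, -, hy⟩ := hred q hq
      exact fun u hu v hv => (hy u hu).trans (hy v hv).symm
    · simp [hblue q hq]
  have hred' : ∀ q, R q ↔ (A q ∩ range (g : Function.End ℚ)).Nonempty := fun q =>
    ⟨fun hq => (hred q hq).exists, not_imp_not.mp fun hq => by simp [hblue q hq]⟩
  exact eq_of_forall_semiconj ξ hfix g
    (fun x hx => hA.exists_orderIso_fix_range_move hiso hsub hx)
    (fun x y hxy => hA.exists_orderIso_semiconj_fix_move hiso g.2 hsub hred' hR hxy)

theorem fixes_Gamma_of_fixes_G_general (ξ : Mmon →* Emon)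
    (hfix : ∀ f : Mmon, Function.Bijective (f : Function.End ℚ) →
      (ξ f : Function.End ℚ) = (f : Function.End ℚ))
    (g : Mmon)
    (hg : Gamma (g : Function.End ℚ) ∨ GammaP (g : Function.End ℚ) ∨
      GammaM (g : Function.End ℚ) ∨ GammaPM (g : Function.End ℚ)) :
    (ξ g : Function.End ℚ) = (g : Function.End ℚ) := by
  rcases hg with ⟨-, R, hR, hdec⟩ | ⟨-, R, hR, hdec⟩ | ⟨-, R, hR, hdec⟩ | ⟨-, R, hR, hdec⟩
  · exact eq_of_decomp ξ hfix g hR.separatesRedPoints hdec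
  · exact eq_of_decomp ξ hfix g (hR.separatesRedPoints.withTop (by simp) (by simp)) hdec
  · exact eq_of_decomp ξ hfix g (hR.separatesRedPoints.withBot (by simp) (by simp)) hdec
  · refine eq_of_decomp ξ hfix g ?_ hdec
    exact (hR.separatesRedPoints.withTop (R' := fun w => ∃ p : ℚ, w = ↑p ∧ R p)
      (by simp) (by simp)).withBot (by simp) (by simp)

/-- **Lemma 2.2.** Any injective monoid homomorphism `ξ : M → E` which fixes every
element of `G = Aut(ℚ,<)` (the invertible members of `M`) pointwise also fixes every
member of `Γ ∪ Γ⁺ ∪ Γ⁻ ∪ Γ±`. -/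
theorem fixes_Gamma_of_fixes_G (ξ : Mmon →* Emon) (hinj : Function.Injective ξ)
    (hfix : ∀ f : Mmon, Function.Bijective (f : Function.End ℚ) →
      (ξ f : Function.End ℚ) = (f : Function.End ℚ))
    (g : Mmon)
    (hg : Gamma (g : Function.End ℚ) ∨ GammaP (g : Function.End ℚ) ∨
      GammaM (g : Function.End ℚ) ∨ GammaPM (g : Function.End ℚ)) :
    (ξ g : Function.End ℚ) = (g : Function.End ℚ) :=
  fixes_Gamma_of_fixes_G_general ξ hfix g hg
end

section
/- If g₁ and g₂ both lie in Γ, then the composite g₂ ∘ g₁ also lies in Γ; the analogous statements hold for Γ⁺, Γ⁻ and Γ±. -/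
/-! Write `f = g₂ ∘ g₁` and `T = im f`. Call two rationals near when the closed interval between
them meets `T` at most once. As `T ≅ ℚ` is dense in itself, this is an equivalence relation with
convex classes, and its classes are the pieces of the decomposition for `f`. Every class is a union
of pieces of the decomposition for `g₂`, hence again a copy of `ℚ`. Classes meeting `T` are dense
because `T` is dense in itself; classes missing `T` are dense because `g₂` sends a point of a blue
piece of the decomposition for `g₁` to a point that is separated from each point of `T` by another
point of `T`. So the classes form a countable dense linear order with the same endpoints as the
index set, and Cantor's theorem identifies the two. -/

open Set

section NonExtremal

variable (α : Type*) [LinearOrder α]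

def nonExtremal : Set α := {x | ¬IsMax x ∧ ¬IsMin x}

instance : (nonExtremal α).OrdConnected :=
  ⟨fun _ hx _ hy _ hz => ⟨fun h => hy.1 (h.mono hz.2), fun h => hx.2 (h.mono hz.1)⟩⟩

variable [DenselyOrdered α] [Nontrivial α]

instance : Nonempty (nonExtremal α) :=
  let ⟨_, _, hxy⟩ := exists_pair_lt α
  let ⟨z, hxz, hzy⟩ := exists_between hxy
  ⟨⟨z, hzy.not_isMax, hxz.not_isMin⟩⟩

instance : NoMaxOrder (nonExtremal α) :=
  ⟨fun ⟨_, hx⟩ =>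
    let ⟨_, hxy⟩ := not_isMax_iff.1 hx.1
    let ⟨z, hxz, hzy⟩ := exists_between hxy
    ⟨⟨z, hzy.not_isMax, hxz.not_isMin⟩, hxz⟩⟩

instance : NoMinOrder (nonExtremal α) :=
  ⟨fun ⟨_, hx⟩ =>
    let ⟨_, hyx⟩ := not_isMin_iff.1 hx.2
    let ⟨z, hyz, hzx⟩ := exists_between hyx
    ⟨⟨z, hzx.not_isMax, hyz.not_isMin⟩, hzx⟩⟩

end NonExtremal

theorem strictMono_of_isMax_iff_of_isMin_iff {α β : Type*} [LinearOrder α] [LinearOrder β]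
    {f : α → β} (hmax : ∀ x, IsMax (f x) ↔ IsMax x) (hmin : ∀ x, IsMin (f x) ↔ IsMin x)
    (hf : StrictMonoOn f (nonExtremal α)) : StrictMono f := by
  intro x y hxy
  by_cases hy : IsMax y
  · exact lt_of_not_ge fun h => (hmax x).not.2 hxy.not_isMax (((hmax y).2 hy).mono h)
  by_cases hx : IsMin x
  · exact lt_of_not_ge fun h => (hmin y).not.2 hxy.not_isMin (((hmin x).2 hx).mono h)
  exact hf ⟨hxy.not_isMax, hx⟩ ⟨hy, hxy.not_isMin⟩ hxy

theorem Order.iso_of_countable_dense_of_isMax_iff {α β : Type*} [LinearOrder α] [LinearOrder β]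
    [Countable α] [DenselyOrdered α] [Nontrivial α] [Countable β] [DenselyOrdered β]
    [Nontrivial β] (hmax : (∃ a : α, IsMax a) ↔ ∃ b : β, IsMax b)
    (hmin : (∃ a : α, IsMin a) ↔ ∃ b : β, IsMin b) : Nonempty (α ≃o β) := by
  obtain ⟨e⟩ := Order.iso_of_countable_dense (nonExtremal α) (nonExtremal β)
  classical
  let f : α → β := fun x =>
    if hM : IsMax x then (hmax.1 ⟨x, hM⟩).choose
    else if hm : IsMin x then (hmin.1 ⟨x, hm⟩).choose
    else e ⟨x, hM, hm⟩
  have f_eq : ∀ x (hx : x ∈ nonExtremal α), f x = e ⟨x, hx⟩ := fun x hx => by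
    simp only [f, dif_neg hx.1, dif_neg hx.2]
  have f_extr : ∀ x, (IsMax (f x) ↔ IsMax x) ∧ (IsMin (f x) ↔ IsMin x) := by
    intro x
    by_cases hM : IsMax x
    · have h := (hmax.1 ⟨x, hM⟩).choose_spec
      simp only [f, dif_pos hM]
      exact ⟨iff_of_true h hM, iff_of_false h.not_isMin hM.not_isMin⟩
    by_cases hm : IsMin x
    · have h := (hmin.1 ⟨x, hm⟩).choose_spec
      simp only [f, dif_neg hM, dif_pos hm]
      exact ⟨iff_of_false h.not_isMax' hm.not_isMax', iff_of_true h hm⟩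
    rw [f_eq x ⟨hM, hm⟩]
    exact ⟨iff_of_false (e _).2.1 hM, iff_of_false (e _).2.2 hm⟩
  have hf : StrictMono f := strictMono_of_isMax_iff_of_isMin_iff (fun x => (f_extr x).1)
    (fun x => (f_extr x).2) fun x hx y hy hxy => by
      rw [f_eq x hx, f_eq y hy]
      exact e.strictMono (Subtype.mk_lt_mk.2 hxy)
  refine ⟨hf.orderIsoOfSurjective f fun y => ?_⟩
  by_cases hM : IsMax y
  · obtain ⟨x, hx⟩ := hmax.2 ⟨y, hM⟩
    exact ⟨x, le_antisymm (hM.isTop _) (((f_extr x).1.2 hx).isTop y)⟩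
  by_cases hm : IsMin y
  · obtain ⟨x, hx⟩ := hmin.2 ⟨y, hm⟩
    exact ⟨x, le_antisymm (((f_extr x).2.2 hx).isBot y) (hm.isBot _)⟩
  refine ⟨e.symm ⟨y, hM, hm⟩, ?_⟩
  rw [f_eq _ (e.symm _).2]
  simp

section Near

variable {α : Type*} [LinearOrder α]

theorem Set.subsingleton_inter_uIcc_trans {T : Set α} [DenselyOrdered T] {x y z : α}
    (hxy : (T ∩ uIcc x y).Subsingleton) (hyz : (T ∩ uIcc y z).Subsingleton) :
    (T ∩ uIcc x z).Subsingleton := by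
  by_contra h
  obtain ⟨s, ⟨hsT, hs⟩, t, ⟨htT, ht⟩, hst⟩ := (not_subsingleton_iff.1 h).exists_lt
  obtain ⟨⟨w, hwT⟩, hsw, hwt⟩ := exists_between (show (⟨s, hsT⟩ : T) < ⟨t, htT⟩ from hst)
  rw [Subtype.mk_lt_mk] at hsw hwt
  have hw : w ∈ uIcc x z := ordConnected_uIcc.out hs ht ⟨hsw.le, hwt.le⟩
  -- pigeonhole: of `s < w < t`, two lie in `[[x, y]]` or two in `[[y, z]]`
  rcases uIcc_subset_uIcc_union_uIcc hw with hw' | hw'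
  · have hs' := (uIcc_subset_uIcc_union_uIcc hs).resolve_left
      fun h => hsw.ne (hxy ⟨hsT, h⟩ ⟨hwT, hw'⟩)
    have ht' := (uIcc_subset_uIcc_union_uIcc ht).resolve_left
      fun h => hwt.ne (hxy ⟨hwT, hw'⟩ ⟨htT, h⟩)
    exact hst.ne (hyz ⟨hsT, hs'⟩ ⟨htT, ht'⟩)
  · have hs' := (uIcc_subset_uIcc_union_uIcc hs).resolve_right
      fun h => hsw.ne (hyz ⟨hsT, h⟩ ⟨hwT, hw'⟩)
    have ht' := (uIcc_subset_uIcc_union_uIcc ht).resolve_right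
      fun h => hwt.ne (hyz ⟨hwT, hw'⟩ ⟨htT, h⟩)
    exact hst.ne (hxy ⟨hsT, hs'⟩ ⟨htT, ht'⟩)

/-- The paper's `∼` counts the points of `T` strictly between `x` and `y`; for `T` dense in itself
this has the same classes as counting them in the closed interval. -/
def nearSetoid (T : Set α) [DenselyOrdered T] : Setoid α where
  r x y := (T ∩ uIcc x y).Subsingleton
  iseqv :=
    { refl := fun x => subsingleton_singleton.anti fun _ h => by simpa using h.2
      symm := fun h => by rwa [uIcc_comm]
      trans := subsingleton_inter_uIcc_trans }

variable {T : Set α} [DenselyOrdered T]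

instance (c : Quotient (nearSetoid T)) : OrdConnected (Quotient.mk (nearSetoid T) ⁻¹' {c}) := by
  refine ⟨fun x hx y hy z hz => ?_⟩
  have hxy : (T ∩ uIcc x y).Subsingleton := Quotient.exact (hx.trans hy.symm)
  exact (Quotient.sound (hxy.anti (inter_subset_inter_right _
    (uIcc_subset_uIcc (Icc_subset_uIcc hz) left_mem_uIcc)))).trans hx

noncomputable instance : LinearOrder (Quotient (nearSetoid T)) := by
  classical exact Quotient.instLinearOrder

namespace nearSetoid

theorem mk_lt_mk_of_mem {s t : α} (hs : s ∈ T) (ht : t ∈ T) (hst : s < t) :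
    Quotient.mk (nearSetoid T) s < Quotient.mk (nearSetoid T) t :=
  Quotient.mk_lt_mk.2 ⟨hst, fun h => hst.ne (h ⟨hs, left_mem_uIcc⟩ ⟨ht, right_mem_uIcc⟩)⟩

theorem eq_of_mk_eq {s t : α} (hs : s ∈ T) (ht : t ∈ T)
    (h : Quotient.mk (nearSetoid T) s = Quotient.mk (nearSetoid T) t) : s = t :=
  Quotient.exact h ⟨hs, left_mem_uIcc⟩ ⟨ht, right_mem_uIcc⟩

theorem exists_mem_mk_between {c d : Quotient (nearSetoid T)} (h : c < d) :
    ∃ t ∈ T, c < Quotient.mk (nearSetoid T) t ∧ Quotient.mk (nearSetoid T) t < d := by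
  induction c using Quotient.inductionOn with | h x
  induction d using Quotient.inductionOn with | h y
  obtain ⟨hxy, hnear⟩ := Quotient.mk_lt_mk.1 h
  obtain ⟨s, ⟨hsT, hs⟩, t, ⟨htT, ht⟩, hst⟩ := (not_subsingleton_iff.1 hnear).exists_lt
  rw [uIcc_of_le hxy.le] at hs ht
  obtain ⟨⟨w, hwT⟩, hsw, hwt⟩ := exists_between (show (⟨s, hsT⟩ : T) < ⟨t, htT⟩ from hst)
  exact ⟨w, hwT, (Quotient.mk_monotone hs.1).trans_lt (mk_lt_mk_of_mem hsT hwT hsw),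
    (mk_lt_mk_of_mem hwT htT hwt).trans_le (Quotient.mk_monotone ht.2)⟩

instance : DenselyOrdered (Quotient (nearSetoid T)) :=
  ⟨fun _ _ h => let ⟨_, _, h⟩ := exists_mem_mk_between h; ⟨_, h⟩⟩

theorem isMax_mk {x : α} (hx : ∀ t ∈ T, t < x) : IsMax (Quotient.mk (nearSetoid T) x) := by
  intro c hc
  induction c using Quotient.inductionOn with | h y
  rcases le_total y x with hyx | hxy
  · exact Quotient.mk_monotone hyx
  · refine (Quotient.sound fun s hs => ?_).le
    rw [uIcc_of_ge hxy] at hs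
    exact ((hx s hs.1).not_ge hs.2.1).elim

theorem isMin_mk {x : α} (hx : ∀ t ∈ T, x < t) : IsMin (Quotient.mk (nearSetoid T) x) := by
  intro c hc
  induction c using Quotient.inductionOn with | h y
  rcases le_total x y with hxy | hyx
  · exact Quotient.mk_monotone hxy
  · refine (Quotient.sound fun s hs => ?_).ge
    rw [uIcc_of_le hyx] at hs
    exact ((hx s hs.1).not_ge hs.2.2).elim

theorem noMaxOrder (h : ∀ x, ∃ t ∈ T, x < t) : NoMaxOrder (Quotient (nearSetoid T)) :=
  ⟨fun c => Quotient.inductionOn c fun x =>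
    let ⟨s, hs, hxs⟩ := h x
    let ⟨_, ht, hst⟩ := h s
    ⟨_, (Quotient.mk_monotone hxs.le).trans_lt (mk_lt_mk_of_mem hs ht hst)⟩⟩

theorem noMinOrder (h : ∀ x, ∃ t ∈ T, t < x) : NoMinOrder (Quotient (nearSetoid T)) :=
  ⟨fun c => Quotient.inductionOn c fun x =>
    let ⟨s, hs, hsx⟩ := h x
    let ⟨_, ht, hts⟩ := h s
    ⟨_, (mk_lt_mk_of_mem ht hs hts).trans_le (Quotient.mk_monotone hsx.le)⟩⟩

theorem exists_isMax_iff {ι : Type*} [Preorder ι]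
    (hbdd : (∃ q : ι, IsMax q) → ∃ x, ∀ t ∈ T, t < x)
    (hunbdd : (∀ q : ι, ¬IsMax q) → ∀ x, ∃ t ∈ T, x < t) :
    (∃ c : Quotient (nearSetoid T), IsMax c) ↔ ∃ q : ι, IsMax q := by
  refine ⟨fun ⟨c, hc⟩ => by_contra fun h => ?_, fun h => ?_⟩
  · have := noMaxOrder (hunbdd (not_exists.1 h))
    exact not_isMax c hc
  · obtain ⟨x, hx⟩ := hbdd h
    exact ⟨_, isMax_mk hx⟩

theorem exists_isMin_iff {ι : Type*} [Preorder ι]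
    (hbdd : (∃ q : ι, IsMin q) → ∃ x, ∀ t ∈ T, x < t)
    (hunbdd : (∀ q : ι, ¬IsMin q) → ∀ x, ∃ t ∈ T, t < x) :
    (∃ c : Quotient (nearSetoid T), IsMin c) ↔ ∃ q : ι, IsMin q := by
  refine ⟨fun ⟨c, hc⟩ => by_contra fun h => ?_, fun h => ?_⟩
  · have := noMinOrder (hunbdd (not_exists.1 h))
    exact not_isMin c hc
  · obtain ⟨x, hx⟩ := hbdd h
    exact ⟨_, isMin_mk hx⟩

end nearSetoid

end Near

/-- `DenseColouring` for an arbitrary index order; on `ℚ` the two agree definitionally. -/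
def IsDenseColouring {ι : Type*} [LT ι] (R : ι → Prop) : Prop :=
  ∀ x y : ι, x < y → (∃ z, x < z ∧ z < y ∧ R z) ∧ (∃ z, x < z ∧ z < y ∧ ¬ R z)

theorem IsDenseColouring.comp_symm {α β : Type*} [Preorder α] [Preorder β] {R : α → Prop}
    (hR : IsDenseColouring R) (e : α ≃o β) : IsDenseColouring fun b => R (e.symm b) := by
  intro x y hxy
  obtain ⟨⟨z, hxz, hzy, hz⟩, ⟨w, hxw, hwy, hw⟩⟩ := hR _ _ (e.symm.strictMono hxy)
  exact ⟨⟨e z, e.symm_apply_lt.1 hxz, e.lt_symm_apply.1 hzy, by simpa using hz⟩,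
    ⟨e w, e.symm_apply_lt.1 hxw, e.lt_symm_apply.1 hwy, by simpa using hw⟩⟩

section FarFrom

variable {α : Type*} [LinearOrder α]

def FarFrom (T : Set α) (x : α) : Prop := ∀ t ∈ T, ∃ t' ∈ T, t' ≠ t ∧ t' ∈ uIcc t x

theorem FarFrom.image {β : Type*} [LinearOrder β] {T : Set α} {x : α} (h : FarFrom T x)
    {g : α → β} (hg : StrictMono g) : FarFrom (g '' T) (g x) := by
  rintro _ ⟨t, ht, rfl⟩
  obtain ⟨t', ht', hne, hmem⟩ := h t ht
  exact ⟨g t', mem_image_of_mem g ht', hg.injective.ne hne,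
    hg.monotone.image_uIcc_subset (mem_image_of_mem g hmem)⟩

variable {T : Set α} [DenselyOrdered T]

theorem nearSetoid.mk_ne_of_farFrom {x t : α} (hx : FarFrom T x) (ht : t ∈ T) :
    Quotient.mk (nearSetoid T) t ≠ Quotient.mk (nearSetoid T) x := fun h =>
  let ⟨_, ht', hne, hmem⟩ := hx t ht
  hne (Quotient.exact h ⟨ht', hmem⟩ ⟨ht, left_mem_uIcc⟩)

theorem nearSetoid.isDenseColouring
    (hfar : ∀ s ∈ T, ∀ t ∈ T, s < t → ∃ x ∈ Ioo s t, FarFrom T x) :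
    IsDenseColouring fun c : Quotient (nearSetoid T) => ∃ t ∈ T, Quotient.mk _ t = c := by
  intro c d hcd
  obtain ⟨s, hs, hcs, hsd⟩ := exists_mem_mk_between hcd
  obtain ⟨t, ht, hst, htd⟩ := exists_mem_mk_between hsd
  obtain ⟨x, ⟨hsx, hxt⟩, hx⟩ := hfar s hs t ht (Quotient.lt_of_mk_lt_mk hst)
  refine ⟨⟨_, hcs, hsd, s, hs, rfl⟩,
    ⟨Quotient.mk _ x, ?_, ?_, fun ⟨u, hu, h⟩ => mk_ne_of_farFrom hx hu h⟩⟩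
  · exact hcs.trans ((Quotient.mk_monotone hsx.le).lt_of_ne (mk_ne_of_farFrom hx hs))
  · exact ((Quotient.mk_monotone hxt.le).lt_of_ne (mk_ne_of_farFrom hx ht).symm).trans htd

end FarFrom

/-- A decomposition seen through the map sending `x` to the index of the piece containing it. -/
structure PieceMap (ι : Type*) [LinearOrder ι] (R : ι → Prop) (f : ℚ → ℚ) where
  toFun : ℚ → ι
  monotone : Monotone toFun
  surjective : Function.Surjective toFun
  exists_gt : ∀ x, ∃ y, x < y ∧ toFun y = toFun x
  exists_lt : ∀ x, ∃ y, y < x ∧ toFun y = toFun x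
  red_iff : ∀ q, R q ↔ ∃ a, toFun (f a) = q
  eq_of_apply_eq : ∀ a b, toFun (f a) = toFun (f b) → f a = f b

namespace PieceMap

variable {ι : Type*} [LinearOrder ι] {R : ι → Prop} {f : ℚ → ℚ}

instance : CoeFun (PieceMap ι R f) fun _ => ℚ → ι := ⟨toFun⟩

theorem red_apply (π : PieceMap ι R f) (a : ℚ) : R (π (f a)) := (π.red_iff _).2 ⟨a, rfl⟩

theorem subsingleton_range_inter_uIcc (π : PieceMap ι R f) {x y : ℚ} (h : π x = π y) :
    (range f ∩ uIcc x y).Subsingleton := by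
  have hfib : uIcc x y ⊆ π ⁻¹' {π x} :=
    (ordConnected_singleton.preimage_mono π.monotone).uIcc_subset rfl h.symm
  rintro _ ⟨⟨a, rfl⟩, ha⟩ _ ⟨⟨b, rfl⟩, hb⟩
  exact π.eq_of_apply_eq a b ((hfib ha).trans (hfib hb).symm)

theorem exists_forall_lt_of_isMax (π : PieceMap ι R f) (hR : ∀ q, R q → ¬IsMax q) {q : ι}
    (hq : IsMax q) : ∃ x, ∀ t ∈ range f, t < x := by
  obtain ⟨x, rfl⟩ := π.surjective q
  refine ⟨x, ?_⟩
  rintro _ ⟨a, rfl⟩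
  exact π.monotone.reflect_lt (lt_of_not_ge fun h => hR _ (π.red_apply a) (hq.mono h))

theorem exists_forall_gt_of_isMin (π : PieceMap ι R f) (hR : ∀ q, R q → ¬IsMin q) {q : ι}
    (hq : IsMin q) : ∃ x, ∀ t ∈ range f, x < t := by
  obtain ⟨x, rfl⟩ := π.surjective q
  refine ⟨x, ?_⟩
  rintro _ ⟨a, rfl⟩
  exact π.monotone.reflect_lt (lt_of_not_ge fun h => hR _ (π.red_apply a) (hq.mono h))

theorem exists_gt_apply (π : PieceMap ι R f) (hR : IsDenseColouring R)
    (hι : ∀ q : ι, ¬IsMax q) (x : ℚ) : ∃ a, x < f a := by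
  obtain ⟨q, hq⟩ := not_isMax_iff.1 (hι (π x))
  obtain ⟨r, hxr, -, hr⟩ := (hR _ _ hq).1
  obtain ⟨a, rfl⟩ := (π.red_iff r).1 hr
  exact ⟨a, π.monotone.reflect_lt hxr⟩

theorem exists_lt_apply (π : PieceMap ι R f) (hR : IsDenseColouring R)
    (hι : ∀ q : ι, ¬IsMin q) (x : ℚ) : ∃ a, f a < x := by
  obtain ⟨q, hq⟩ := not_isMin_iff.1 (hι (π x))
  obtain ⟨r, -, hrx, hr⟩ := (hR _ _ hq).1
  obtain ⟨a, rfl⟩ := (π.red_iff r).1 hr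
  exact ⟨a, π.monotone.reflect_lt hrx⟩

theorem exists_farFrom_between (π : PieceMap ι R f) (hR : IsDenseColouring R) {a b : ℚ}
    (hab : f a < f b) : ∃ z ∈ Ioo (f a) (f b), FarFrom (range f) z := by
  have hlt : π (f a) < π (f b) :=
    (π.monotone hab.le).lt_of_ne fun h => hab.ne (π.eq_of_apply_eq a b h)
  obtain ⟨p, hap, hpb, hp⟩ := (hR _ _ hlt).2
  obtain ⟨z, rfl⟩ := π.surjective p
  refine ⟨z, ⟨π.monotone.reflect_lt hap, π.monotone.reflect_lt hpb⟩, ?_⟩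
  rintro _ ⟨c, rfl⟩
  have hne : π (f c) ≠ π z := fun h => hp (h ▸ π.red_apply c)
  rcases hne.lt_or_gt with h | h
  · obtain ⟨r, hcr, hrz, hr⟩ := (hR _ _ h).1
    obtain ⟨d, rfl⟩ := (π.red_iff r).1 hr
    exact ⟨f d, ⟨d, rfl⟩, (π.monotone.reflect_lt hcr).ne',
      mem_uIcc_of_le (π.monotone.reflect_lt hcr).le (π.monotone.reflect_lt hrz).le⟩
  · obtain ⟨r, hzr, hrc, hr⟩ := (hR _ _ h).1
    obtain ⟨d, rfl⟩ := (π.red_iff r).1 hr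
    exact ⟨f d, ⟨d, rfl⟩, (π.monotone.reflect_lt hrc).ne,
      mem_uIcc_of_ge (π.monotone.reflect_lt hzr).le (π.monotone.reflect_lt hrc).le⟩

end PieceMap

theorem Decomp.nonempty_pieceMap {ι : Type} [LinearOrder ι] {R : ι → Prop} {f : ℚ → ℚ}
    (h : Decomp ι R f) : Nonempty (PieceMap ι R f) := by
  obtain ⟨A, hmem, hord, -, hiso, hred, hblue⟩ := h
  choose π hπ hπu using hmem
  have mem_iff : ∀ x q, x ∈ A q ↔ π x = q := fun x q => ⟨fun h => (hπu x q h).symm, (· ▸ hπ x)⟩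
  have red_apply : ∀ a, R (π (f a)) := fun a => by_contra fun hq =>
    (hblue _ hq).subset ⟨hπ (f a), a, rfl⟩
  refine ⟨⟨π, fun x y hxy => not_lt.1 fun h => (hord _ _ h y (hπ y) x (hπ x)).not_ge hxy,
    fun q => ?_, fun x => ?_, fun x => ?_, fun q => ⟨fun hq => ?_, ?_⟩, fun a b hab => ?_⟩⟩
  · obtain ⟨e⟩ := hiso q
    exact ⟨e.symm 0, (mem_iff _ _).1 (e.symm 0).2⟩
  · obtain ⟨e⟩ := hiso (π x)
    exact ⟨e.symm (e ⟨x, hπ x⟩ + 1), e.lt_symm_apply.2 (lt_add_one (e ⟨x, hπ x⟩)),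
      (mem_iff _ _).1 (e.symm _).2⟩
  · obtain ⟨e⟩ := hiso (π x)
    exact ⟨e.symm (e ⟨x, hπ x⟩ - 1), e.symm_apply_lt.2 (sub_one_lt (e ⟨x, hπ x⟩)),
      (mem_iff _ _).1 (e.symm _).2⟩
  · obtain ⟨_, ⟨hyA, a, rfl⟩, -⟩ := hred q hq
    exact ⟨a, (mem_iff _ _).1 hyA⟩
  · rintro ⟨a, rfl⟩
    exact red_apply a
  · obtain ⟨y, -, huniq⟩ := hred _ (red_apply b)
    exact (huniq _ ⟨(mem_iff _ _).2 hab, a, rfl⟩).trans (huniq _ ⟨hπ _, b, rfl⟩).symm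

theorem PieceMap.decomp {ι : Type} [LinearOrder ι] {R : ι → Prop} {f : ℚ → ℚ}
    (π : PieceMap ι R f) : Decomp ι R f := by
  have hconn : ∀ q, (π ⁻¹' {q}).OrdConnected := fun q =>
    ordConnected_singleton.preimage_mono π.monotone
  refine ⟨fun q => π ⁻¹' {q}, fun x => ⟨π x, rfl, fun q hq => hq.symm⟩,
    fun q r hqr a ha b hb => π.monotone.reflect_lt (ha ▸ hb ▸ hqr), hconn, fun q => ?_,
    fun q hq => ?_, fun q hq => ?_⟩
  · obtain ⟨x, rfl⟩ := π.surjective q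
    have : Nonempty (π ⁻¹' {π x}) := ⟨⟨x, rfl⟩⟩
    have : NoMaxOrder (π ⁻¹' {π x}) := ⟨fun ⟨y, hy⟩ =>
      let ⟨z, hyz, hz⟩ := π.exists_gt y; ⟨⟨z, hz.trans hy⟩, hyz⟩⟩
    have : NoMinOrder (π ⁻¹' {π x}) := ⟨fun ⟨y, hy⟩ =>
      let ⟨z, hzy, hz⟩ := π.exists_lt y; ⟨⟨z, hz.trans hy⟩, hzy⟩⟩
    exact Order.iso_of_countable_dense _ _
  · obtain ⟨a, rfl⟩ := (π.red_iff q).1 hq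
    exact ⟨f a, ⟨rfl, a, rfl⟩, fun _ ⟨hy, b, hb⟩ => hb ▸ π.eq_of_apply_eq b a (hb ▸ hy)⟩
  · exact eq_empty_iff_forall_notMem.2 fun _ ⟨hy, a, ha⟩ => hq ((π.red_iff q).2 ⟨a, ha ▸ hy⟩)

section Composite

variable {ι : Type*} [LinearOrder ι] [Countable ι] [DenselyOrdered ι] [Nontrivial ι]

/-- The pieces for `f` are the classes of `nearSetoid (range f)`, indexed by `ι` through
Cantor's theorem. -/
theorem PieceMap.exists_condensation {R : ι → Prop} {g f : ℚ → ℚ} (π : PieceMap ι R g)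
    (hRext : ∀ q, R q → ¬IsMax q ∧ ¬IsMin q) (hf : StrictMono f) (hfg : range f ⊆ range g)
    (hfar : ∀ s ∈ range f, ∀ t ∈ range f, s < t → ∃ x ∈ Ioo s t, FarFrom (range f) x)
    (hup : (∀ q : ι, ¬IsMax q) → ∀ x, ∃ t ∈ range f, x < t)
    (hdown : (∀ q : ι, ¬IsMin q) → ∀ x, ∃ t ∈ range f, t < x) :
    ∃ R' : ι → Prop, IsDenseColouring R' ∧ (∀ q, R' q → ¬IsMax q ∧ ¬IsMin q) ∧
      Nonempty (PieceMap ι R' f) := by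
  have : DenselyOrdered (range f) := hf.denselyOrdered_range
  have hmk : ∀ a b, a < b → Quotient.mk (nearSetoid (range f)) (f a) < Quotient.mk _ (f b) :=
    fun a b hab => nearSetoid.mk_lt_mk_of_mem ⟨a, rfl⟩ ⟨b, rfl⟩ (hf hab)
  have : Nontrivial (Quotient (nearSetoid (range f))) := ⟨⟨_, _, (hmk 0 1 one_pos).ne⟩⟩
  obtain ⟨e⟩ := Order.iso_of_countable_dense_of_isMax_iff
    (nearSetoid.exists_isMax_iff (fun ⟨_, hq⟩ => (π.exists_forall_lt_of_isMax
      (hRext · · |>.1) hq).imp fun _ hx t ht => hx t (hfg ht)) hup)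
    (nearSetoid.exists_isMin_iff (fun ⟨_, hq⟩ => (π.exists_forall_gt_of_isMin
      (hRext · · |>.2) hq).imp fun _ hx t ht => hx t (hfg ht)) hdown)
  refine ⟨fun q => ∃ t ∈ range f, Quotient.mk _ t = e.symm q,
    (nearSetoid.isDenseColouring hfar).comp_symm e, ?_, ⟨?_⟩⟩
  · rintro q ⟨_, ⟨a, rfl⟩, ha⟩
    exact ⟨fun h => (ha ▸ hmk a (a + 1) (lt_add_one a)).not_isMax (e.symm.isMax_apply.2 h),
      fun h => (ha ▸ hmk (a - 1) a (sub_one_lt a)).not_isMin (e.symm.isMin_apply.2 h)⟩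
  refine
    { toFun := fun x => e (Quotient.mk _ x)
      monotone := e.monotone.comp Quotient.mk_monotone
      surjective := e.surjective.comp Quotient.mk_surjective
      exists_gt := fun x => ?_
      exists_lt := fun x => ?_
      red_iff := fun q => by simp only [exists_range_iff, e.eq_symm_apply]
      eq_of_apply_eq := fun a b h =>
        nearSetoid.eq_of_mk_eq (mem_range_self a) (mem_range_self b) (e.injective h) }
  -- a piece for `g` meets `im g ⊇ im f` at most once, so it lies in a single class
  · obtain ⟨y, hxy, hy⟩ := π.exists_gt x
    exact ⟨y, hxy, congrArg e (Quotient.sound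
      ((π.subsingleton_range_inter_uIcc hy).anti (inter_subset_inter_left _ hfg)))⟩
  · obtain ⟨y, hyx, hy⟩ := π.exists_lt x
    exact ⟨y, hyx, congrArg e (Quotient.sound
      ((π.subsingleton_range_inter_uIcc hy).anti (inter_subset_inter_left _ hfg)))⟩

theorem PieceMap.comp {R₁ R₂ : ι → Prop} {g₁ g₂ : ℚ → ℚ} (π₁ : PieceMap ι R₁ g₁)
    (π₂ : PieceMap ι R₂ g₂) (h₁ : StrictMono g₁) (h₂ : StrictMono g₂) (hR₁ : IsDenseColouring R₁)
    (hR₂ : IsDenseColouring R₂) (hR₂ext : ∀ q, R₂ q → ¬IsMax q ∧ ¬IsMin q) :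
    ∃ R, IsDenseColouring R ∧ (∀ q, R q → ¬IsMax q ∧ ¬IsMin q) ∧
      Nonempty (PieceMap ι R (g₂ ∘ g₁)) := by
  refine π₂.exists_condensation hR₂ext (h₂.comp h₁) (range_comp_subset_range g₁ g₂) ?_ ?_ ?_
  · rintro _ ⟨a, rfl⟩ _ ⟨b, rfl⟩ hab
    obtain ⟨z, ⟨haz, hzb⟩, hz⟩ := π₁.exists_farFrom_between hR₁ (h₂.lt_iff_lt.1 hab)
    exact ⟨g₂ z, ⟨h₂ haz, h₂ hzb⟩, range_comp g₂ g₁ ▸ hz.image h₂⟩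
  · intro hι x
    obtain ⟨b, hb⟩ := π₂.exists_gt_apply hR₂ hι x
    obtain ⟨a, ha⟩ := π₁.exists_gt_apply hR₁ hι b
    exact ⟨_, ⟨a, rfl⟩, hb.trans (h₂ ha)⟩
  · intro hι x
    obtain ⟨b, hb⟩ := π₂.exists_lt_apply hR₂ hι x
    obtain ⟨a, ha⟩ := π₁.exists_lt_apply hR₁ hι b
    exact ⟨_, ⟨a, rfl⟩, (h₂ ha).trans hb⟩

end Composite

theorem Decomp.comp {ι : Type} [LinearOrder ι] [Countable ι] [DenselyOrdered ι] [Nontrivial ι]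
    {R₁ R₂ : ι → Prop} {g₁ g₂ : ℚ → ℚ} (h₁ : StrictMono g₁)
    (h₂ : StrictMono g₂) (hR₁ : IsDenseColouring R₁) (hR₂ : IsDenseColouring R₂)
    (hR₂ext : ∀ q, R₂ q → ¬IsMax q ∧ ¬IsMin q) (D₁ : Decomp ι R₁ g₁) (D₂ : Decomp ι R₂ g₂) :
    ∃ R, IsDenseColouring R ∧ (∀ q, R q → ¬IsMax q ∧ ¬IsMin q) ∧ Decomp ι R (g₂ ∘ g₁) := by
  obtain ⟨π₁⟩ := D₁.nonempty_pieceMap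
  obtain ⟨π₂⟩ := D₂.nonempty_pieceMap
  obtain ⟨R, hR, hRext, ⟨π⟩⟩ := π₁.comp π₂ h₁ h₂ hR₁ hR₂ hR₂ext
  exact ⟨R, hR, hRext, π.decomp⟩

theorem DenseColouring.isDenseColouring_image {ι : Type*} [LinearOrder ι] [DenselyOrdered ι]
    {c : ℚ → ι} (hc : StrictMono c) (hrange : ∀ q, q ∈ range c ↔ ¬IsMax q ∧ ¬IsMin q)
    {R : ℚ → Prop} (hR : DenseColouring R) : IsDenseColouring fun q => ∃ p, q = c p ∧ R p := by
  intro x y hxy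
  obtain ⟨u, hxu, huy⟩ := exists_between hxy
  obtain ⟨v, huv, hvy⟩ := exists_between huy
  obtain ⟨p, rfl⟩ := (hrange u).2 ⟨huv.not_isMax, hxu.not_isMin⟩
  obtain ⟨p', rfl⟩ := (hrange v).2 ⟨hvy.not_isMax, huv.not_isMin⟩
  obtain ⟨⟨r, hpr, hrp, hr⟩, ⟨b, hpb, hbp, hb⟩⟩ := hR p p' (hc.lt_iff_lt.1 huv)
  refine ⟨⟨c r, hxu.trans (hc hpr), (hc hrp).trans hvy, r, rfl, hr⟩,
    ⟨c b, hxu.trans (hc hpb), (hc hbp).trans hvy, ?_⟩⟩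
  rintro ⟨p, hp, hRp⟩
  exact hb (hc.injective hp ▸ hRp)

theorem IsDenseColouring.denseColouring_comp {ι : Type*} [LinearOrder ι] {c : ℚ → ι}
    (hc : StrictMono c) (hrange : ∀ q, q ∈ range c ↔ ¬IsMax q ∧ ¬IsMin q) {R : ι → Prop}
    (hR : IsDenseColouring R) : DenseColouring fun p => R (c p) := by
  intro p p' hpp
  obtain ⟨⟨z, hz₁, hz₂, hz⟩, ⟨w, hw₁, hw₂, hw⟩⟩ := hR _ _ (hc hpp)
  obtain ⟨r, rfl⟩ := (hrange z).2 ⟨hz₂.not_isMax, hz₁.not_isMin⟩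
  obtain ⟨b, rfl⟩ := (hrange w).2 ⟨hw₂.not_isMax, hw₁.not_isMin⟩
  exact ⟨⟨r, hc.lt_iff_lt.1 hz₁, hc.lt_iff_lt.1 hz₂, hz⟩,
    ⟨b, hc.lt_iff_lt.1 hw₁, hc.lt_iff_lt.1 hw₂, hw⟩⟩

theorem Decomp.comp_of_strictMono {ι : Type} [LinearOrder ι] [Countable ι] [DenselyOrdered ι]
    [Nontrivial ι] {c : ℚ → ι} (hc : StrictMono c)
    (hrange : ∀ q, q ∈ range c ↔ ¬IsMax q ∧ ¬IsMin q) {g₁ g₂ : ℚ → ℚ} (h₁ : StrictMono g₁)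
    (h₂ : StrictMono g₂) {R₁ R₂ : ℚ → Prop} (hR₁ : DenseColouring R₁) (hR₂ : DenseColouring R₂)
    (D₁ : Decomp ι (fun q => ∃ p, q = c p ∧ R₁ p) g₁)
    (D₂ : Decomp ι (fun q => ∃ p, q = c p ∧ R₂ p) g₂) :
    ∃ R : ℚ → Prop, DenseColouring R ∧ Decomp ι (fun q => ∃ p, q = c p ∧ R p) (g₂ ∘ g₁) := by
  obtain ⟨R, hR, hRext, hD⟩ := Decomp.comp h₁ h₂ (hR₁.isDenseColouring_image hc hrange)
    (hR₂.isDenseColouring_image hc hrange) (by rintro _ ⟨p, rfl, -⟩; exact (hrange _).1 ⟨p, rfl⟩)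
    D₁ D₂
  have hR_eq : (fun q => ∃ p, q = c p ∧ R (c p)) = R := funext fun q => propext
    ⟨by rintro ⟨p, rfl, h⟩; exact h, fun h => let ⟨p, hp⟩ := (hrange q).2 (hRext q h);
      ⟨p, hp.symm, hp ▸ h⟩⟩
  rw [← hR_eq] at hD
  exact ⟨fun p => R (c p), hR.denseColouring_comp hc hrange, hD⟩

/-- **Lemma 2.3.** If `g₁` and `g₂` lie in `Γ` then so does `g₂ ∘ g₁`; similarly for
`Γ⁺`, `Γ⁻` and `Γ±`. -/
theorem Gamma_comp (g₁ g₂ : ℚ → ℚ) :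
    (Gamma g₁ → Gamma g₂ → Gamma (g₂ ∘ g₁)) ∧
    (GammaP g₁ → GammaP g₂ → GammaP (g₂ ∘ g₁)) ∧
    (GammaM g₁ → GammaM g₂ → GammaM (g₂ ∘ g₁)) ∧
    (GammaPM g₁ → GammaPM g₂ → GammaPM (g₂ ∘ g₁)) := by
  refine ⟨?_, ?_, ?_, ?_⟩ <;> rintro ⟨h₁, R₁, hR₁, D₁⟩ ⟨h₂, R₂, hR₂, D₂⟩ <;>
    refine ⟨h₂.comp h₁, ?_⟩
  · obtain ⟨R, hR, -, hD⟩ :=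
      Decomp.comp h₁ h₂ hR₁ hR₂ (fun q _ => ⟨not_isMax q, not_isMin q⟩) D₁ D₂
    exact ⟨R, hR, hD⟩
  · refine Decomp.comp_of_strictMono WithTop.coe_strictMono (fun q => ?_) h₁ h₂ hR₁ hR₂ D₁ D₂
    cases q using WithTop.recTopCoe <;> simp
  · refine Decomp.comp_of_strictMono WithBot.coe_strictMono (fun q => ?_) h₁ h₂ hR₁ hR₂ D₁ D₂
    cases q using WithBot.recBotCoe <;> simp
  · refine Decomp.comp_of_strictMono (WithBot.coe_strictMono.comp WithTop.coe_strictMono)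
      (fun q => ?_) h₁ h₂ hR₁ hR₂ D₁ D₂
    cases q using WithBot.recBotCoe with
    | bot => simp
    | coe q => cases q using WithTop.recTopCoe <;> simp
end

section
/- For any f ∈ M whose image is coterminal in ℚ (that is, for every x ∈ ℚ there are u, v ∈ im(f) with u ≤ x ≤ v), there exists g ∈ Γ such that g ∘ f ∈ Γ. -/
/-!
Put `ℚ` inside a countable set `Z ⊆ ℝ` which also contains, between any two points of `ℚ` and
between any two points of `im f`, a real number that the set in question approaches from both
sides without containing it. Read `q ↦ (q, 0)` through an isomorphism `Z ×ₗ ℚ ≃o ℚ` to get `g`;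
then `im g` and `im (g ∘ f)` correspond to `ℚ × {0}` and `im f × {0}`. For either set, every
`∼`-class is convex and contains a whole column `{z} × ℚ`, so it is a copy of `ℚ`; it meets the
set at most once; and the class of `(α, 0)`, for a real `α` as above, does not meet it at all.
Hence red and blue classes are both dense in the countable dense order of classes, which is then
a copy of `ℚ₂`.
-/

open Set

lemma decomp_of_monotone_fibers {ι : Type} [LinearOrder ι] {f : ℚ → ℚ} {π : ℚ → ι}
    (hmono : Monotone π) (hsurj : Function.Surjective π)
    (hup : ∀ a, ∃ b, a < b ∧ π b = π a) (hdown : ∀ a, ∃ b, b < a ∧ π b = π a)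
    (hinj : InjOn π (range f)) : Decomp ι (· ∈ π '' range f) f := by
  have hconn (r : ι) : OrdConnected (π ⁻¹' {r}) := ordConnected_singleton.preimage_mono hmono
  refine ⟨fun r => π ⁻¹' {r}, fun a => ⟨π a, rfl, fun r hr => hr.symm⟩, ?_, hconn, fun r => ?_,
    ?_, ?_⟩
  · intro r r' hrr' a ha b hb
    exact lt_of_not_ge fun hba => (hmono hba).not_gt (by rwa [ha, hb])
  · obtain ⟨a, ha⟩ := hsurj r
    have : Nonempty (π ⁻¹' {r}) := ⟨⟨a, ha⟩⟩
    have : NoMaxOrder (π ⁻¹' {r}) := ⟨fun ⟨a, ha⟩ =>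
      let ⟨b, hab, hb⟩ := hup a; ⟨⟨b, hb.trans ha⟩, hab⟩⟩
    have : NoMinOrder (π ⁻¹' {r}) := ⟨fun ⟨a, ha⟩ =>
      let ⟨b, hba, hb⟩ := hdown a; ⟨⟨b, hb.trans ha⟩, hba⟩⟩
    exact Order.iso_of_countable_dense _ ℚ
  · rintro r ⟨a, haf, rfl⟩
    exact ⟨a, ⟨rfl, haf⟩, fun b hb => hinj hb.2 haf hb.1⟩
  · intro r hr
    exact eq_empty_iff_forall_notMem.2 fun a ha => hr ⟨a, ha.2, ha.1⟩

section Clusters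

variable {L : Type*} [LinearOrder L]

/-- The paper's `∼` counts the points of `S` strictly between `x` and `y`; counting them weakly,
as here, gives the same relation when `S` is dense in itself. -/
def Clustered (S : Set L) (x y : L) : Prop := (S ∩ uIcc x y).Subsingleton

variable {S : Set L} {x y z s s' : L}

lemma Clustered.refl (x : L) : Clustered S x x := by
  rw [Clustered, uIcc_self]
  exact subsingleton_singleton.anti inter_subset_right

lemma Clustered.symm (h : Clustered S x y) : Clustered S y x := by
  rwa [Clustered, uIcc_comm]

lemma Clustered.mono {x' y' : L} (h : Clustered S x y) (hx : x' ∈ uIcc x y)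
    (hy : y' ∈ uIcc x y) : Clustered S x' y' :=
  h.anti (inter_subset_inter_right _ (uIcc_subset_uIcc hx hy))

lemma not_clustered_of_mem (hs : s ∈ S) (hs' : s' ∈ S) (hne : s ≠ s') (hsxy : s ∈ uIcc x y)
    (hs'xy : s' ∈ uIcc x y) : ¬ Clustered S x y :=
  fun h => hne (h ⟨hs, hsxy⟩ ⟨hs', hs'xy⟩)

lemma not_clustered_of_ne (hs : s ∈ S) (hs' : s' ∈ S) (hne : s ≠ s') : ¬ Clustered S s s' :=
  not_clustered_of_mem hs hs' hne left_mem_uIcc right_mem_uIcc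

lemma exists_mem_between [DenselyOrdered S] (hs : s ∈ S) (hs' : s' ∈ S) (h : s < s') :
    ∃ c ∈ S, s < c ∧ c < s' := by
  obtain ⟨⟨c, hc⟩, hsc, hcs'⟩ := exists_between (show (⟨s, hs⟩ : S) < ⟨s', hs'⟩ from h)
  exact ⟨c, hc, hsc, hcs'⟩

lemma Clustered.trans [DenselyOrdered S] (h₁ : Clustered S x y) (h₂ : Clustered S y z) :
    Clustered S x z := by
  intro s hs s' hs'
  wlog hlt : s < s' generalizing s s'
  · rcases (not_lt.1 hlt).eq_or_lt with h | h
    · exact h.symm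
    · exact (this hs' hs h).symm
  -- Whichever of `[x, y]`, `[y, z]` contains a point `c ∈ S` strictly between `s` and `s'`
  -- contains neither `s` nor `s'`, so the other one contains both.
  obtain ⟨c, hc, hsc, hcs'⟩ := exists_mem_between hs.1 hs'.1 hlt
  have hcxz : c ∈ uIcc x z := ordConnected_uIcc.out hs.2 hs'.2 ⟨hsc.le, hcs'.le⟩
  rcases uIcc_subset_uIcc_union_uIcc (b := y) hcxz with hcxy | hcyz
  · have hother : ∀ t ∈ S ∩ uIcc x z, t ≠ c → t ∈ uIcc y z := fun t ht htc =>
      (uIcc_subset_uIcc_union_uIcc ht.2).resolve_left fun h => htc (h₁ ⟨ht.1, h⟩ ⟨hc, hcxy⟩)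
    exact h₂ ⟨hs.1, hother s hs hsc.ne⟩ ⟨hs'.1, hother s' hs' hcs'.ne'⟩
  · have hother : ∀ t ∈ S ∩ uIcc x z, t ≠ c → t ∈ uIcc x y := fun t ht htc =>
      (uIcc_subset_uIcc_union_uIcc ht.2).resolve_right fun h => htc (h₂ ⟨ht.1, h⟩ ⟨hc, hcyz⟩)
    exact h₁ ⟨hs.1, hother s hs hsc.ne⟩ ⟨hs'.1, hother s' hs' hcs'.ne'⟩

variable (S) in
def clusterSetoid [DenselyOrdered S] : Setoid L where
  r := Clustered S
  iseqv := ⟨Clustered.refl, Clustered.symm, Clustered.trans⟩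

variable (S) in
abbrev Clusters [DenselyOrdered S] : Type _ := Quotient (clusterSetoid S)

variable [DenselyOrdered S]

instance (c : Clusters S) : OrdConnected (Quotient.mk (clusterSetoid S) ⁻¹' {c}) :=
  ⟨fun x hx y hy z hz => by
    have hxy : Clustered S x y := Quotient.exact (hx.trans hy.symm)
    exact (Quotient.sound (hxy.mono (Icc_subset_uIcc hz) left_mem_uIcc)).trans hx⟩

noncomputable instance : LinearOrder (Clusters S) := by
  classical exact Quotient.instLinearOrder

lemma mk_lt_mk_of_not_clustered (hxs : x ≤ s) (hss' : s < s') (hs'y : s' ≤ y)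
    (h : ¬ Clustered S s s') : Quotient.mk (clusterSetoid S) x < Quotient.mk _ y :=
  Quotient.mk_lt_mk.2 ⟨hxs.trans_lt (hss'.trans_le hs'y), fun hxy =>
    h (Clustered.mono hxy (Icc_subset_uIcc ⟨hxs, hss'.le.trans hs'y⟩)
      (Icc_subset_uIcc ⟨hxs.trans hss'.le, hs'y⟩))⟩

lemma exists_two_mem_of_mk_lt_mk (h : Quotient.mk (clusterSetoid S) x < Quotient.mk _ y) :
    ∃ s ∈ S, ∃ s' ∈ S, x ≤ s ∧ s < s' ∧ s' ≤ y := by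
  obtain ⟨hxy, hnc⟩ := Quotient.mk_lt_mk.1 h
  obtain ⟨s, hs, s', hs', hss'⟩ := (not_subsingleton_iff.1 hnc).exists_lt
  rw [uIcc_of_le hxy.le] at hs hs'
  exact ⟨s, hs.1, s', hs'.1, hs.2.1, hss', hs'.2.2⟩

lemma exists_red_between {c c' : Clusters S} (h : c < c') :
    ∃ s ∈ S, c < Quotient.mk _ s ∧ Quotient.mk _ s < c' := by
  induction c using Quotient.inductionOn with | h x
  induction c' using Quotient.inductionOn with | h y
  obtain ⟨s, hs, s', hs', hxs, hss', hs'y⟩ := exists_two_mem_of_mk_lt_mk h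
  obtain ⟨c, hc, hsc, hcs'⟩ := exists_mem_between hs hs' hss'
  exact ⟨c, hc, mk_lt_mk_of_not_clustered hxs hsc le_rfl (not_clustered_of_ne hs hc hsc.ne),
    mk_lt_mk_of_not_clustered le_rfl hcs' hs'y (not_clustered_of_ne hc hs' hcs'.ne)⟩

lemma exists_blue_between
    (h_blue : ∀ s ∈ S, ∀ s' ∈ S, s < s' → ∃ t, s < t ∧ t < s' ∧ ∀ u ∈ S, ¬ Clustered S u t)
    {c c' : Clusters S} (h : c < c') :
    ∃ t, (∀ u ∈ S, Quotient.mk (clusterSetoid S) u ≠ Quotient.mk _ t) ∧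
      c < Quotient.mk _ t ∧ Quotient.mk _ t < c' := by
  induction c using Quotient.inductionOn with | h x
  induction c' using Quotient.inductionOn with | h y
  obtain ⟨s, hs, s', hs', hxs, hss', hs'y⟩ := exists_two_mem_of_mk_lt_mk h
  obtain ⟨t, hst, hts', ht⟩ := h_blue s hs s' hs' hss'
  exact ⟨t, fun u hu heq => ht u hu (Quotient.exact heq),
    mk_lt_mk_of_not_clustered hxs hst le_rfl (ht s hs),
    mk_lt_mk_of_not_clustered le_rfl hts' hs'y fun h => ht s' hs' h.symm⟩

instance : DenselyOrdered (Clusters S) :=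
  ⟨fun _ _ h => let ⟨_, _, hs⟩ := exists_red_between h; ⟨_, hs⟩⟩

lemma noMaxOrder_clusters (h_cofinal : ∀ x, ∃ s ∈ S, x < s) : NoMaxOrder (Clusters S) := by
  refine ⟨fun c => ?_⟩
  induction c using Quotient.inductionOn with | h x
  obtain ⟨s, hs, hxs⟩ := h_cofinal x
  obtain ⟨s', hs', hss'⟩ := h_cofinal s
  exact ⟨_, mk_lt_mk_of_not_clustered hxs.le hss' le_rfl (not_clustered_of_ne hs hs' hss'.ne)⟩

lemma noMinOrder_clusters (h_coinitial : ∀ x, ∃ s ∈ S, s < x) : NoMinOrder (Clusters S) := by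
  refine ⟨fun c => ?_⟩
  induction c using Quotient.inductionOn with | h x
  obtain ⟨s, hs, hsx⟩ := h_coinitial x
  obtain ⟨s', hs', hs's⟩ := h_coinitial s
  exact ⟨_, mk_lt_mk_of_not_clustered le_rfl hs's hsx.le (not_clustered_of_ne hs' hs hs's.ne)⟩

theorem gamma_of_clusters (e : L ≃o ℚ)
    (h_cofinal : ∀ x, ∃ s ∈ S, x < s) (h_coinitial : ∀ x, ∃ s ∈ S, s < x)
    (h_blue : ∀ s ∈ S, ∀ s' ∈ S, s < s' → ∃ t, s < t ∧ t < s' ∧ ∀ u ∈ S, ¬ Clustered S u t)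
    (h_up : ∀ x, ∃ y, x < y ∧ Clustered S x y) (h_down : ∀ x, ∃ y, y < x ∧ Clustered S x y)
    {g : ℚ → ℚ} (hg : StrictMono g) (hrange : range g = e '' S) : Gamma g := by
  have : Countable L := e.injective.countable
  have : Nonempty (Clusters S) := ⟨Quotient.mk _ (e.symm 0)⟩
  have := noMaxOrder_clusters h_cofinal
  have := noMinOrder_clusters h_coinitial
  obtain ⟨ind⟩ := Order.iso_of_countable_dense (Clusters S) ℚ
  set π : ℚ → ℚ := fun a => ind (Quotient.mk _ (e.symm a))
  have hπe (s : L) : π (e s) = ind (Quotient.mk _ s) := by simp [π]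
  refine ⟨hg, (· ∈ π '' range g), fun r r' hrr' => ⟨?_, ?_⟩,
    decomp_of_monotone_fibers (ind.monotone.comp (Quotient.mk_monotone.comp e.symm.monotone))
      (ind.surjective.comp (Quotient.mk_surjective.comp e.symm.surjective)) (fun a => ?_)
      (fun a => ?_) ?_⟩
  · obtain ⟨s, hs, h₁, h₂⟩ := exists_red_between (ind.symm.lt_iff_lt.2 hrr')
    exact ⟨π (e s), by rwa [hπe, ← ind.symm_apply_lt], by rwa [hπe, ← ind.lt_symm_apply],
      mem_image_of_mem π (hrange ▸ mem_image_of_mem e hs)⟩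
  · obtain ⟨t, ht, h₁, h₂⟩ := exists_blue_between h_blue (ind.symm.lt_iff_lt.2 hrr')
    refine ⟨π (e t), by rwa [hπe, ← ind.symm_apply_lt], by rwa [hπe, ← ind.lt_symm_apply], ?_⟩
    rintro ⟨_, ha, heq⟩
    obtain ⟨u, hu, rfl⟩ := hrange ▸ ha
    exact ht u hu (ind.injective (by rwa [hπe, hπe] at heq))
  · obtain ⟨y, hy, hxy⟩ := h_up (e.symm a)
    exact ⟨e y, e.symm_apply_lt.1 hy, by rw [hπe, Quotient.sound hxy.symm]⟩
  · obtain ⟨y, hy, hxy⟩ := h_down (e.symm a)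
    exact ⟨e y, e.lt_symm_apply.1 hy, by rw [hπe, Quotient.sound hxy.symm]⟩
  · rw [hrange]
    rintro _ ⟨s, hs, rfl⟩ _ ⟨s', hs', rfl⟩ h
    by_contra hne
    rw [hπe, hπe] at h
    exact not_clustered_of_ne hs hs' (ne_of_apply_ne e hne) (Quotient.exact (ind.injective h))

end Clusters

structure IsGapPoint {α : Type*} [LinearOrder α] (D : Set α) (t : α) : Prop where
  notMem : t ∉ D
  exists_above : ∀ d ∈ D, d < t → ∃ d' ∈ D, d < d' ∧ d' < t
  exists_below : ∀ d ∈ D, t < d → ∃ d' ∈ D, t < d' ∧ d' < d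

lemma IsGapPoint.of_comp {α β γ : Type*} [LinearOrder β] [LinearOrder γ] {j : β → γ}
    (hj : StrictMono j) {ι : α → β} {t : β} (h : IsGapPoint (range (j ∘ ι)) (j t)) :
    IsGapPoint (range ι) t where
  notMem := fun ⟨a, ha⟩ => h.notMem ⟨a, congrArg j ha⟩
  exists_above := by
    rintro _ ⟨a, rfl⟩ hat
    obtain ⟨_, ⟨b, rfl⟩, hab, hbt⟩ := h.exists_above _ ⟨a, rfl⟩ (hj hat)
    exact ⟨ι b, ⟨b, rfl⟩, hj.lt_iff_lt.1 hab, hj.lt_iff_lt.1 hbt⟩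
  exists_below := by
    rintro _ ⟨a, rfl⟩ hta
    obtain ⟨_, ⟨b, rfl⟩, htb, hba⟩ := h.exists_below _ ⟨a, rfl⟩ (hj hta)
    exact ⟨ι b, ⟨b, rfl⟩, hj.lt_iff_lt.1 htb, hj.lt_iff_lt.1 hba⟩

section Lex

variable {Z : Type*} [LinearOrder Z]

lemma fst_eq_of_mem_uIcc {x y u : Z ×ₗ ℚ} (hxy : (ofLex x).1 = (ofLex y).1)
    (hu : u ∈ uIcc x y) : (ofLex u).1 = (ofLex x).1 := by
  have hfst := Prod.Lex.monotone_fst_ofLex (α := Z) (β := ℚ)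
  rcases mem_uIcc.1 hu with ⟨hxu, huy⟩ | ⟨hyu, hux⟩
  · exact le_antisymm (hxy ▸ hfst huy) (hfst hxu)
  · exact le_antisymm (hfst hux) (hxy ▸ hfst hyu)

lemma clustered_of_fst_eq {S : Set (Z ×ₗ ℚ)} (hS : ∀ s ∈ S, (ofLex s).2 = 0) {x y : Z ×ₗ ℚ}
    (hxy : (ofLex x).1 = (ofLex y).1) : Clustered S x y := fun u hu v hv =>
  ofLex_inj.1 (Prod.ext ((fst_eq_of_mem_uIcc hxy hu.2).trans (fst_eq_of_mem_uIcc hxy hv.2).symm)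
    ((hS u hu.1).trans (hS v hv.1).symm))

lemma not_clustered_of_isGapPoint {ι : ℚ → Z} {t : Z} (ht : IsGapPoint (range ι) t) (q : ℚ) :
    ¬ Clustered (range fun q => toLex (ι q, (0 : ℚ))) (toLex (ι q, 0)) (toLex (t, 0)) := by
  have hlt {z z' : Z} (h : z < z') : toLex (z, (0 : ℚ)) < toLex (z', 0) :=
    Prod.Lex.toLex_lt_toLex.2 (Or.inl h)
  rcases lt_or_gt_of_ne fun h => ht.notMem ⟨q, h⟩ with hqt | htq
  · obtain ⟨_, ⟨r, rfl⟩, hqr, hrt⟩ := ht.exists_above _ ⟨q, rfl⟩ hqt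
    exact not_clustered_of_mem ⟨q, rfl⟩ ⟨r, rfl⟩ (hlt hqr).ne left_mem_uIcc
      (Icc_subset_uIcc ⟨(hlt hqr).le, (hlt hrt).le⟩)
  · obtain ⟨_, ⟨r, rfl⟩, htr, hrq⟩ := ht.exists_below _ ⟨q, rfl⟩ htq
    exact not_clustered_of_mem ⟨q, rfl⟩ ⟨r, rfl⟩ (hlt hrq).ne' left_mem_uIcc
      (Icc_subset_uIcc' ⟨(hlt htr).le, (hlt hrq).le⟩)

theorem gamma_of_lex (e : Z ×ₗ ℚ ≃o ℚ) {ι : ℚ → Z} (hι : StrictMono ι)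
    (htop : ∀ z, ∃ q, z < ι q) (hbot : ∀ z, ∃ q, ι q < z)
    (hgap : ∀ a b, a < b → ∃ t, ι a < t ∧ t < ι b ∧ IsGapPoint (range ι) t) :
    Gamma fun q => e (toLex (ι q, 0)) := by
  set k : ℚ → Z ×ₗ ℚ := fun q => toLex (ι q, 0)
  have hlt {z z' : Z} (h : z < z') : toLex (z, (0 : ℚ)) < toLex (z', 0) :=
    Prod.Lex.toLex_lt_toLex.2 (Or.inl h)
  have hk : StrictMono k := fun a b h => hlt (hι h)
  have := hk.denselyOrdered_range
  have hS : ∀ s ∈ range k, (ofLex s).2 = 0 := by rintro _ ⟨q, rfl⟩; rfl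
  refine gamma_of_clusters e (fun x => ?_) (fun x => ?_) ?_
    (fun x => ⟨toLex ((ofLex x).1, (ofLex x).2 + 1),
      Prod.Lex.lt_iff.2 (Or.inr ⟨rfl, lt_add_one _⟩), clustered_of_fst_eq hS rfl⟩)
    (fun x => ⟨toLex ((ofLex x).1, (ofLex x).2 - 1),
      Prod.Lex.lt_iff.2 (Or.inr ⟨rfl, sub_one_lt _⟩), clustered_of_fst_eq hS rfl⟩)
    (e.strictMono.comp hk) (range_comp _ _)
  · obtain ⟨q, hq⟩ := htop (ofLex x).1
    exact ⟨k q, ⟨q, rfl⟩, Prod.Lex.lt_iff.2 (Or.inl hq)⟩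
  · obtain ⟨q, hq⟩ := hbot (ofLex x).1
    exact ⟨k q, ⟨q, rfl⟩, Prod.Lex.lt_iff.2 (Or.inl hq)⟩
  · rintro _ ⟨a, rfl⟩ _ ⟨b, rfl⟩ hab
    obtain ⟨t, hat, htb, ht⟩ := hgap a b (hk.lt_iff_lt.1 hab)
    refine ⟨toLex (t, 0), hlt hat, hlt htb, ?_⟩
    rintro _ ⟨q, rfl⟩
    exact not_clustered_of_isGapPoint ht q

end Lex

section Real

variable {ψ : ℚ → ℝ}

lemma exists_separating_value (hψ : StrictMono ψ) (x : ℝ) :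
    ∃ α, ∀ q : ℚ, ((q : ℝ) < x → ψ q < α) ∧ (x < q → α < ψ q) := by
  obtain ⟨q₀, hq₀⟩ := exists_rat_lt x
  obtain ⟨q₁, hq₁⟩ := exists_rat_gt x
  have hbound : ∀ r : ℚ, x < r → ∀ y ∈ ψ '' {q | (q : ℝ) < x}, y ≤ ψ r := by
    rintro r hr _ ⟨q, hq, rfl⟩
    exact (hψ (by exact_mod_cast (hq.trans hr : (q : ℝ) < r))).le
  refine ⟨sSup (ψ '' {q | (q : ℝ) < x}), fun q => ⟨fun hq => ?_, fun hq => ?_⟩⟩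
  · obtain ⟨r, hqr, hrx⟩ := exists_rat_btwn hq
    exact (hψ (by exact_mod_cast hqr)).trans_le (le_csSup ⟨_, hbound q₁ hq₁⟩ ⟨r, hrx, rfl⟩)
  · obtain ⟨r, hxr, hrq⟩ := exists_rat_btwn hq
    exact (csSup_le (Nonempty.image ψ ⟨q₀, hq₀⟩) (hbound r hxr)).trans_lt
      (hψ (by exact_mod_cast hrq))

lemma isGapPoint_range_of_separates (hψ : StrictMono ψ) {x α : ℝ} (hx : Irrational x)
    (hα : ∀ q : ℚ, ((q : ℝ) < x → ψ q < α) ∧ (x < q → α < ψ q)) : IsGapPoint (range ψ) α where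
  notMem := by
    rintro ⟨q, hq⟩
    rcases lt_or_gt_of_ne (hx.ne_rat q).symm with h | h
    · exact ((hα q).1 h).ne hq
    · exact ((hα q).2 h).ne' hq
  exists_above := by
    rintro _ ⟨q, rfl⟩ hq
    have hqx : (q : ℝ) < x := (lt_or_gt_of_ne (hx.ne_rat q).symm).resolve_right
      fun h => ((hα q).2 h).asymm hq
    obtain ⟨r, hqr, hrx⟩ := exists_rat_btwn hqx
    exact ⟨ψ r, ⟨r, rfl⟩, hψ (by exact_mod_cast hqr), (hα r).1 hrx⟩
  exists_below := by
    rintro _ ⟨q, rfl⟩ hq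
    have hxq : x < q := (lt_or_gt_of_ne (hx.ne_rat q).symm).resolve_left
      fun h => ((hα q).1 h).asymm hq
    obtain ⟨r, hxr, hrq⟩ := exists_rat_btwn hxq
    exact ⟨ψ r, ⟨r, rfl⟩, (hα r).2 hxr, hψ (by exact_mod_cast hrq)⟩

lemma exists_isGapPoint_between (hψ : StrictMono ψ) {a b : ℚ} (hab : a < b) :
    ∃ α, ψ a < α ∧ α < ψ b ∧ IsGapPoint (range ψ) α := by
  obtain ⟨x, hx, hax, hxb⟩ := exists_irrational_btwn (Rat.cast_lt.2 hab : (a : ℝ) < b)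
  obtain ⟨α, hα⟩ := exists_separating_value hψ x
  exact ⟨α, (hα a).1 hax, (hα b).2 hxb, isGapPoint_range_of_separates hψ hx hα⟩

lemma exists_countable_isGapPoints (hψ : StrictMono ψ) :
    ∃ Z : Set ℝ, Z.Countable ∧
      ∀ a b : ℚ, a < b → ∃ α ∈ Z, ψ a < α ∧ α < ψ b ∧ IsGapPoint (range ψ) α := by
  have h (ab : ℚ × ℚ) : ∃ α, ab.1 < ab.2 → ψ ab.1 < α ∧ α < ψ ab.2 ∧ IsGapPoint (range ψ) α :=
    if hab : ab.1 < ab.2 then (exists_isGapPoint_between hψ hab).imp fun _ h _ => h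
    else ⟨0, fun h => absurd h hab⟩
  choose α hα using h
  exact ⟨range α, countable_range α, fun a b hab => ⟨α (a, b), mem_range_self _, hα (a, b) hab⟩⟩

theorem gamma_of_real {Z : Set ℝ} (e : Z ×ₗ ℚ ≃o ℚ) (hψ : StrictMono ψ) (hψZ : ∀ q, ψ q ∈ Z)
    (htop : ∀ y, ∃ q, y < ψ q) (hbot : ∀ y, ∃ q, ψ q < y)
    (hgap : ∀ a b, a < b → ∃ α ∈ Z, ψ a < α ∧ α < ψ b ∧ IsGapPoint (range ψ) α) :
    Gamma fun q => e (toLex (⟨ψ q, hψZ q⟩, 0)) :=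
  gamma_of_lex e (ι := fun q => ⟨ψ q, hψZ q⟩) (fun _ _ h => hψ h) (fun z => htop z)
    (fun z => hbot z) fun a b hab =>
      let ⟨α, hαZ, haα, hαb, hα⟩ := hgap a b hab
      ⟨⟨α, hαZ⟩, haα, hαb, IsGapPoint.of_comp (j := Subtype.val) (Subtype.strictMono_coe _) hα⟩

end Real

/-- **Lemma 2.4.** For any `f ∈ M` whose image is coterminal in `ℚ`, there is `g ∈ Γ`
such that `g ∘ f ∈ Γ`. -/
theorem exists_Gamma_comp_mem_Gamma (f : ℚ → ℚ) (hf : StrictMono f)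
    (hcot : ∀ x : ℚ, (∃ u ∈ Set.range f, u ≤ x) ∧ (∃ v ∈ Set.range f, x ≤ v)) :
    ∃ g : ℚ → ℚ, Gamma g ∧ Gamma (g ∘ f) := by
  have hcast : StrictMono ((↑) : ℚ → ℝ) := Rat.cast_strictMono
  obtain ⟨Z₁, hZ₁, hgap₁⟩ := exists_countable_isGapPoints hcast
  obtain ⟨Z₂, hZ₂, hgap₂⟩ := exists_countable_isGapPoints (hcast.comp hf)
  set Z : Set ℝ := range ((↑) : ℚ → ℝ) ∪ Z₁ ∪ Z₂
  have hmem (q : ℚ) : (q : ℝ) ∈ Z := .inl (.inl ⟨q, rfl⟩)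
  have : Countable (Z ×ₗ ℚ) :=
    have : Countable Z := ((countable_range _).union hZ₁ |>.union hZ₂).to_subtype
    inferInstanceAs (Countable (Z × ℚ))
  have : Nonempty (Z ×ₗ ℚ) := ⟨toLex (⟨_, hmem 0⟩, 0)⟩
  obtain ⟨e⟩ := Order.iso_of_countable_dense (Z ×ₗ ℚ) ℚ
  refine ⟨_, gamma_of_real e hcast hmem exists_rat_gt exists_rat_lt fun a b hab => ?_,
    gamma_of_real e (hcast.comp hf) (fun q => hmem (f q)) (fun y => ?_) (fun y => ?_)
      fun a b hab => ?_⟩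
  · obtain ⟨α, hα, h⟩ := hgap₁ a b hab
    exact ⟨α, .inl (.inr hα), h⟩
  · obtain ⟨r, hr⟩ := exists_rat_gt y
    obtain ⟨_, ⟨q, rfl⟩, hq⟩ := (hcot r).2
    exact ⟨q, hr.trans_le (Rat.cast_le.2 hq)⟩
  · obtain ⟨r, hr⟩ := exists_rat_lt y
    obtain ⟨_, ⟨q, rfl⟩, hq⟩ := (hcot r).1
    exact ⟨q, (Rat.cast_le.2 hq).trans_lt hr⟩
  · obtain ⟨α, hα, h⟩ := hgap₂ a b hab
    exact ⟨α, .inr hα, h⟩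
end

section
/- Let S denote the set of surjective members of E. Then: (i) every map g : ℚ → ℚ such that f ∘ g = id for some f ∈ S is strictly order-preserving, i.e. belongs to M; (ii) a member f of E belongs to S if and only if there exists g ∈ E with f ∘ g = id; (iii) for f ∈ S and x, y ∈ ℚ, f(x) = y if and only if there exists g ∈ E with f ∘ g = id and g(y) = x; consequently distinct members of S have distinct sets of right inverse endomorphisms. -/
open Function

/-- Any right inverse of a monotone map is strictly monotone. -/
lemma aux_strictMono {f g : ℚ → ℚ} (hf : Monotone f) (h : f ∘ g = id) :
    StrictMono g := by
  intro a b hab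
  by_contra hle
  push_neg at hle
  have := hf hle
  have ha : f (g a) = a := congrFun h a
  have hb : f (g b) = b := congrFun h b
  rw [ha, hb] at this
  exact absurd this (not_le.mpr hab)

/-- Given `f x = y`, there is a monotone right inverse of `f` sending `y` to `x`. -/
lemma aux_exists_g {f : ℚ → ℚ} (hf : Monotone f) (hs : Surjective f) {x y : ℚ}
    (hxy : f x = y) : ∃ g : ℚ → ℚ, Monotone g ∧ f ∘ g = id ∧ g y = x := by
  classical
  set g0 := surjInv hs with hg0
  have hfg0 : ∀ z, f (g0 z) = z := fun z => surjInv_eq hs z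
  refine ⟨fun z => if z = y then x else g0 z, ?_, ?_, by simp⟩
  · -- monotone: show strict mono
    have key : ∀ a b : ℚ, a < b →
        (if a = y then x else g0 a) < (if b = y then x else g0 b) := by
      intro a b hab
      by_cases ha : a = y <;> by_cases hb : b = y <;> simp [ha, hb]
      · exact absurd (ha.trans hb.symm) hab.ne
      · -- a = y, b ≠ y: need x < g0 b; f x = y = a < b = f (g0 b)
        by_contra hle
        push_neg at hle
        have := hf hle
        rw [hfg0, hxy] at this
        exact absurd this (not_le.mpr (ha ▸ hab))
      · -- a ≠ y, b = y: need g0 a < x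
        by_contra hle
        push_neg at hle
        have := hf hle
        rw [hfg0, hxy] at this
        exact absurd this (not_le.mpr (hb ▸ hab))
      · -- both ≠ y : g0 a < g0 b since g0 strict mono
        by_contra hle
        push_neg at hle
        have := hf hle
        rw [hfg0, hfg0] at this
        exact absurd this (not_le.mpr hab)
    exact StrictMono.monotone fun a b hab => key a b hab
  · funext z
    by_cases hz : z = y <;> simp [hz, hfg0, hxy]

/-- **Lemma 3.1.** Let `E` be the monoid of order-preserving (monotone) maps `ℚ → ℚ`,
`M` its submonoid of strictly order-preserving maps, and `S` the set of surjective
members of `E`. Then: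
(i) every map right inverse to some `f ∈ S` is strictly order-preserving (belongs to `M`);
(ii) `f ∈ E` is surjective iff it has a right inverse in `E`;
(iii) for `f ∈ S`, `f x = y` iff some right inverse endomorphism of `f` maps `y` to `x`;
consequently distinct members of `S` have distinct sets of right inverse endomorphisms. -/
theorem right_inverses_of_surjective_endos :
    (∀ g : ℚ → ℚ, (∃ f : ℚ → ℚ, Monotone f ∧ Function.Surjective f ∧ f ∘ g = id) →
      StrictMono g) ∧
    (∀ f : ℚ → ℚ, Monotone f →
      (Function.Surjective f ↔ ∃ g : ℚ → ℚ, Monotone g ∧ f ∘ g = id)) ∧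
    (∀ f : ℚ → ℚ, Monotone f → Function.Surjective f → ∀ x y : ℚ,
      (f x = y ↔ ∃ g : ℚ → ℚ, Monotone g ∧ f ∘ g = id ∧ g y = x)) ∧
    (∀ f₁ f₂ : ℚ → ℚ, Monotone f₁ → Function.Surjective f₁ →
      Monotone f₂ → Function.Surjective f₂ →
      {g : ℚ → ℚ | Monotone g ∧ f₁ ∘ g = id} = {g : ℚ → ℚ | Monotone g ∧ f₂ ∘ g = id} →
      f₁ = f₂) := by
  refine ⟨fun g ⟨f, hf, _, h⟩ => aux_strictMono hf h, ?_, ?_, ?_⟩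
  · intro f hf
    constructor
    · intro hs
      obtain ⟨g, hg, hfg, -⟩ := aux_exists_g hf hs (x := 0) rfl
      exact ⟨g, hg, hfg⟩
    · rintro ⟨g, -, hfg⟩
      intro y
      exact ⟨g y, congrFun hfg y⟩
  · intro f hf hs x y
    constructor
    · exact fun h => aux_exists_g hf hs h
    · rintro ⟨g, -, hfg, hgy⟩
      rw [← hgy]
      exact congrFun hfg y
  · intro f₁ f₂ hf₁ hs₁ hf₂ hs₂ hset
    funext x
    obtain ⟨g, hg, hfg, hgy⟩ := aux_exists_g hf₁ hs₁ (x := x) rfl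
    have : g ∈ {g : ℚ → ℚ | Monotone g ∧ f₂ ∘ g = id} := hset ▸ ⟨hg, hfg⟩
    have h2 : f₂ (g (f₁ x)) = f₁ x := congrFun this.2 (f₁ x)
    rw [hgy] at h2
    exact h2.symm ▸ rfl
end

section
/- For every h ∈ E there exist f ∈ M and g ∈ S such that h = g ∘ f; that is, every order-preserving map ℚ → ℚ factors as a surjective order-preserving map composed with a strictly order-preserving map. -/
/-!
Send `x` to the pair `(h x, x)` in the lexicographic order: the second coordinate breaks the ties
of `h`, so this map is strictly monotone, and `h` is recovered from it by the first projection,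
which is monotone and surjective. By Cantor's theorem `ℚ ×ₗ ℚ` is order-isomorphic to `ℚ`.
-/

variable {α β : Type*}

theorem Monotone.strictMono_toLex_mk [Preorder α] [PartialOrder β] {h : α → β}
    (hh : Monotone h) : StrictMono fun x ↦ toLex (h x, x) := fun _ _ hxy ↦
  Prod.Lex.toLex_lt_toLex'.2 ⟨hh hxy.le, fun _ ↦ hxy⟩

theorem Monotone.exists_strictMono_comp_surjective [Preorder α] [Nonempty α] [PartialOrder β]
    (e : β ×ₗ α ≃o β) {h : α → β} (hh : Monotone h) :
    ∃ (f : α → β) (g : β → β), StrictMono f ∧ Monotone g ∧ Function.Surjective g ∧ h = g ∘ f := by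
  refine ⟨fun x ↦ e (toLex (h x, x)), fun y ↦ (ofLex (e.symm y)).1,
    e.strictMono.comp hh.strictMono_toLex_mk,
    Prod.Lex.monotone_fst_ofLex.comp e.symm.monotone, fun b ↦ ?_, ?_⟩
  · obtain ⟨a⟩ := ‹Nonempty α›
    exact ⟨e (toLex (b, a)), by simp⟩
  · funext x
    simp

theorem nonempty_orderIso_ratLexRat : Nonempty (ℚ ×ₗ ℚ ≃o ℚ) :=
  have : Countable (ℚ ×ₗ ℚ) := inferInstanceAs (Countable (ℚ × ℚ))
  Order.iso_of_countable_dense _ _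

/-- **Lemma 3.3.** Every order-preserving map `h : ℚ → ℚ` factors as `h = g ∘ f` with
`f` strictly order-preserving (so `f ∈ M`) and `g` order-preserving and surjective
(so `g ∈ S`). -/
theorem factorization_through_M_and_S (h : ℚ → ℚ) (hh : Monotone h) :
    ∃ f g : ℚ → ℚ, StrictMono f ∧ Monotone g ∧ Function.Surjective g ∧ h = g ∘ f :=
  let ⟨e⟩ := nonempty_orderIso_ratLexRat
  hh.exists_strictMono_comp_surjective e
end

section
/- Any monoid automorphism ξ of E which fixes every element of G pointwise is the identity automorphism of E. -/
theorem MulEquiv.mul_eq_left_of_forall_mul_eq_left {M N : Type*} [Mul M] [Mul N] (e : M ≃* N)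
    {a : M} (ha : ∀ b, a * b = a) (c : N) : e a * c = e a := by
  rw [← e.apply_symm_apply c, ← map_mul, ha]

namespace Emon

def const (q : ℚ) : Emon := ⟨fun _ => q, monotone_const⟩

theorem const_injective : Function.Injective const :=
  fun _ _ h => congrArg (fun f : Emon => (f : Function.End ℚ) 0) h

theorem mul_const (f : Emon) (q : ℚ) : f * const q = const ((f : Function.End ℚ) q) := rfl

theorem const_mul (q : ℚ) (f : Emon) : const q * f = const q := rfl

theorem exists_map_const_eq (ξ : Emon ≃* Emon) (q : ℚ) : ∃ s, ξ (const q) = const s :=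
  ⟨_, (ξ.mul_eq_left_of_forall_mul_eq_left (const_mul q) (const 0)).symm.trans (mul_const _ 0)⟩

def dilate (q : ℚ) : Emon :=
  ⟨fun x => 2 * x - q, fun a b h => by show 2 * a - q ≤ 2 * b - q; linarith⟩

theorem dilate_apply (q x : ℚ) : (dilate q : Function.End ℚ) x = 2 * x - q := rfl

theorem dilate_bijective (q : ℚ) : Function.Bijective (dilate q : Function.End ℚ) :=
  Function.bijective_iff_has_inverse.mpr
    ⟨fun x => (x + q) / 2, fun x => by simp only [dilate_apply]; ring,
      fun x => by simp only [dilate_apply]; ring⟩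

theorem map_const_of_fix_bijective (ξ : Emon ≃* Emon)
    (hfix : ∀ f : Emon, Function.Bijective (f : Function.End ℚ) → ξ f = f) (q : ℚ) :
    ξ (const q) = const q := by
  obtain ⟨s, hs⟩ := exists_map_const_eq ξ q
  have hq : dilate q * const q = const q := by rw [mul_const, dilate_apply]; congr 1; ring
  have hs' : dilate q * const s = const s := by
    rw [← hs, ← hfix _ (dilate_bijective q), ← map_mul, hq]
  rw [mul_const, dilate_apply] at hs'
  rw [hs, show s = q by linarith [const_injective hs']]

end Emon

open Emon in
/-- **Corollary 3.4.** Any monoid automorphism `ξ` of `E = End(ℚ,≤)` which fixes every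
element of `G = Aut(ℚ,<)` (the invertible members of `E`) pointwise is the identity. -/
theorem automorphism_of_E_fixing_G_is_id (ξ : Emon ≃* Emon)
    (hfix : ∀ f : Emon, Function.Bijective (f : Function.End ℚ) → ξ f = f) :
    ∀ f : Emon, ξ f = f := by
  intro f
  refine Subtype.ext (funext fun q => const_injective ?_)
  rw [← mul_const, ← map_const_of_fix_bijective ξ hfix q, ← map_mul, mul_const,
    map_const_of_fix_bijective ξ hfix]
end

section
/- For all f, g ∈ M: im(f) ⊆ im(g) if and only if there exists h ∈ M with f = g ∘ h. Hence the relation 'f, g ∈ M and im(f) ⊆ im(g)' is definable in the monoid E. -/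
/-- **Lemma 3.5.** For strictly order-preserving `f, g : ℚ → ℚ` (members of `M`),
`im(f) ⊆ im(g)` iff `f = g ∘ h` for some strictly order-preserving `h`. Hence the
relation `f, g ∈ M ∧ im(f) ⊆ im(g)` is definable in the monoid `E`. -/
theorem range_subset_iff_factors (f g : ℚ → ℚ) (hf : StrictMono f) (hg : StrictMono g) :
    Set.range f ⊆ Set.range g ↔ ∃ h : ℚ → ℚ, StrictMono h ∧ f = g ∘ h := by
  constructor
  · intro hsub
    have hmem : ∀ q : ℚ, ∃ x, g x = f q := fun q => hsub ⟨q, rfl⟩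
    refine ⟨fun q => (hmem q).choose, ?_, ?_⟩
    · intro a b hab
      have : g (hmem a).choose < g (hmem b).choose := by
        rw [(hmem a).choose_spec, (hmem b).choose_spec]
        exact hf hab
      exact hg.lt_iff_lt.mp this
    · funext q
      exact ((hmem q).choose_spec).symm
  · rintro ⟨h, _, rfl⟩
    exact (Set.range_comp g h ▸ Set.image_subset_range g _)
end

section
/- Let Ω be a countable set and let θ : E → E' be a monoid isomorphism onto a closed submonoid E' of Tr(Ω). Then M' = θ(M) is closed in Tr(Ω), and the restriction θ↾M : M → M' is a homeomorphism. -/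
/-- Topology of pointwise convergence on `Tr(α) = Function.End α` (the codomain
taken discrete, so the sub-basic open sets are `{f : f x = y}`). -/
def funTop (α : Type*) : TopologicalSpace (Function.End α) :=
  @Pi.topologicalSpace α (fun _ => α) (fun _ => ⊥)

/-- The induced (subspace) topology on a submonoid of `Tr(α) = Function.End α`. -/
def monTop {α : Type*} (S : Submonoid (Function.End α)) : TopologicalSpace S :=
  (funTop α).induced Subtype.val

/-- The inclusion `M →* E`. -/
def MtoE : Mmon →* Emon where
  toFun f := ⟨f.1, StrictMono.monotone f.2⟩
  map_one' := rfl
  map_mul' _ _ := rfl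

open Filter Set Topology

attribute [local instance] funTop

section PointwiseTopology

variable {α : Type*}

theorem continuous_funTop_iff {X : Type*} [TopologicalSpace X] {f : X → Function.End α} :
    Continuous f ↔ ∀ a b, IsOpen {x | f x a = b} := by
  let _ : TopologicalSpace α := ⊥
  have _ : DiscreteTopology α := ⟨rfl⟩
  exact continuous_pi_iff.trans <| forall_congr' fun a => continuous_discrete_rng

theorem isOpen_setOf_apply_eq (a b : α) : IsOpen {u : Function.End α | u a = b} :=
  continuous_funTop_iff.mp continuous_id a b

theorem isOpen_setOf_eqOn (K : Finset α) (v : Function.End α) :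
    IsOpen {u : Function.End α | ∀ a ∈ K, u a = v a} := by
  have h : {u : Function.End α | ∀ a ∈ K, u a = v a} = ⋂ a ∈ K, {u | u a = v a} := by
    ext; simp only [mem_iInter, mem_ofPred_eq]
  exact h ▸ isOpen_biInter_finset fun a _ => isOpen_setOf_apply_eq a (v a)

theorem isClopen_setOf_apply₂ (p : α → α → Prop) (a b : α) :
    IsClopen {u : Function.End α | p (u a) (u b)} := by
  let _ : TopologicalSpace α := ⊥
  have _ : DiscreteTopology α := ⟨rfl⟩
  have hcont : Continuous fun u : Function.End α => (u a, u b) :=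
    (continuous_apply a).prodMk (continuous_apply b)
  exact (isClopen_discrete {c : α × α | p c.1 c.2}).preimage hcont

theorem nhds_funTop_hasBasis (v : Function.End α) :
    (𝓝 v).HasBasis (fun _ : Finset α => True) fun K => {u | ∀ a ∈ K, u a = v a} := by
  let _ : TopologicalSpace α := ⊥
  have _ : DiscreteTopology α := ⟨rfl⟩
  have hpi : 𝓝 v = Filter.pi fun a => pure (v a) := by
    refine (nhds_pi (a := (v : α → α))).trans ?_
    simp only [nhds_discrete]
  refine ⟨fun t => ⟨fun ht => ?_, fun ⟨K, _, hK⟩ => mem_of_superset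
    ((isOpen_setOf_eqOn K v).mem_nhds fun _ _ => rfl) hK⟩⟩
  rw [hpi] at ht
  obtain ⟨I, hI, s, hs, hsub⟩ := Filter.mem_pi.mp ht
  exact ⟨hI.toFinset, trivial, fun u hu => hsub fun a ha =>
    (hu a (hI.mem_toFinset.mpr ha)).symm ▸ mem_pure.mp (hs a)⟩

theorem tendsto_funTop_iff {ι : Type*} {l : Filter ι} {u : ι → Function.End α}
    {v : Function.End α} : Tendsto u l (𝓝 v) ↔ ∀ a, ∀ᶠ i in l, u i a = v a := by
  let _ : TopologicalSpace α := ⊥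
  have _ : DiscreteTopology α := ⟨rfl⟩
  exact tendsto_pi_nhds.trans <| forall_congr' fun a => by
    rw [nhds_discrete, tendsto_pure]

theorem isClosed_setOf_strictMono [Preorder α] :
    IsClosed {v : Function.End α | StrictMono v} := by
  have h : {v : Function.End α | StrictMono v} =
      ⋂ a, ⋂ b, {u : Function.End α | a < b → u a < u b} := by
    ext; simp only [mem_iInter, mem_ofPred_eq]; rfl
  rw [h]
  exact isClosed_iInter fun a => isClosed_iInter fun b =>
    (isClopen_setOf_apply₂ (fun c d => a < b → c < d) a b).isClosed

theorem isGδ_setOf_surjective [Countable α] :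
    IsGδ {v : Function.End α | Function.Surjective v} := by
  have h : {v : Function.End α | Function.Surjective v} =
      ⋂ b, ⋃ a, {u : Function.End α | u a = b} := by
    ext; simp only [mem_iInter, mem_iUnion, mem_ofPred_eq]; rfl
  rw [h]
  exact IsGδ.iInter fun b => (isOpen_iUnion fun a => isOpen_setOf_apply_eq a b).isGδ

theorem t2Space_funTop : T2Space (Function.End α) := by
  let _ : TopologicalSpace α := ⊥
  have _ : DiscreteTopology α := ⟨rfl⟩
  exact inferInstanceAs (T2Space (α → α))

theorem polishSpace_funTop [Countable α] : PolishSpace (Function.End α) := by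
  let _ : TopologicalSpace α := ⊥
  have _ : DiscreteTopology α := ⟨rfl⟩
  have _ : PolishSpace α := inferInstance
  exact inferInstanceAs (PolishSpace (α → α))

end PointwiseTopology

attribute [local instance] t2Space_funTop polishSpace_funTop

theorem exists_mem_and_apply_mem_of_residualEq {X : Type*} [TopologicalSpace X] [BaireSpace X]
    {A U V : Set X} (hAU : A =ᶠ[residual X] U) (hV : IsOpen V) (hVne : V.Nonempty)
    (hVU : V ⊆ U) (h : X ≃ₜ X) (hhV : MapsTo h V V) : ∃ z ∈ A, h z ∈ A := by
  have hA : ∀ᶠ z in residual X, z ∈ A ↔ z ∈ U := hAU.mem_iff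
  have hhA : ∀ᶠ z in residual X, h z ∈ A ↔ h z ∈ U := by
    rw [← h.residual_map_eq] at hA
    exact hA
  obtain ⟨z, hzV, hz, hhz⟩ :=
    (dense_of_mem_residual (hA.and hhA)).inter_open_nonempty V hV hVne
  exact ⟨z, hz.mpr (hVU hzV), hhz.mpr (hVU (hhV hzV))⟩

section Extension

variable {α β : Type*} [LinearOrder α] [LinearOrder β]
  [Countable α] [DenselyOrdered α] [NoMinOrder α] [NoMaxOrder α] [Nonempty α]
  [Countable β] [DenselyOrdered β] [NoMinOrder β] [NoMaxOrder β] [Nonempty β]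

open Order PartialIso in
/-- Back-and-forth starting from `p` instead of the empty partial isomorphism. -/
theorem Order.PartialIso.exists_orderIso_extend (p : PartialIso α β) :
    ∃ g : α ≃o β, ∀ c ∈ p.val, g c.1 = c.2 := by
  cases nonempty_encodable α
  cases nonempty_encodable β
  let cofinals : α ⊕ β → Cofinal (PartialIso α β) := fun c =>
    Sum.recOn c (definedAtLeft β) (definedAtRight α)
  let I : Ideal (PartialIso α β) := idealOfCofinals p cofinals
  let F a := funOfIdeal a I (cofinal_meets_idealOfCofinals _ cofinals (Sum.inl a))
  let G b := invOfIdeal b I (cofinal_meets_idealOfCofinals _ cofinals (Sum.inr b))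
  refine ⟨OrderIso.ofCmpEqCmp (fun a => (F a).val) (fun b => (G b).val) fun a b => ?_,
    fun c hc => ?_⟩
  · obtain ⟨f, hf, ha⟩ := (F a).prop
    obtain ⟨g, hg, hb⟩ := (G b).prop
    obtain ⟨m, -, fm, gm⟩ := I.directed _ hf _ hg
    exact m.prop (a, _) (fm ha) (_, b) (gm hb)
  · obtain ⟨f, hf, ha⟩ := (F c.1).prop
    obtain ⟨m, -, fm, pm⟩ := I.directed _ hf _ (mem_idealOfCofinals p cofinals)
    have h := m.prop (c.1, (F c.1).val) (fm ha) c (pm hc)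
    rw [cmp_self_eq_eq, eq_comm, cmp_eq_eq_iff] at h
    exact h

theorem exists_orderIso_eqOn_of_strictMono (K : Finset α) {v : α → β} (hv : StrictMono v) :
    ∃ g : α ≃o β, ∀ a ∈ K, g a = v a := by
  classical
  let p : Order.PartialIso α β := ⟨K.image fun a => (a, v a), by
    simp only [Finset.mem_image]
    rintro _ ⟨a, -, rfl⟩ _ ⟨b, -, rfl⟩
    exact (hv.cmp_map_eq a b).symm⟩
  obtain ⟨g, hg⟩ := p.exists_orderIso_extend
  exact ⟨g, fun a ha => hg (a, v a) (Finset.mem_image_of_mem _ ha)⟩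

end Extension

section Automorphisms

variable {α : Type*} [LinearOrder α]

def autToEnd (g : α ≃o α) : Function.End α := (⇑g : α → α)

abbrev autTop (α : Type*) [LinearOrder α] : TopologicalSpace (α ≃o α) :=
  (funTop α).induced autToEnd

attribute [local instance] autTop

theorem isEmbedding_autToEnd : IsEmbedding (autToEnd : α ≃o α → Function.End α) :=
  ⟨⟨rfl⟩, fun _ _ h => DFunLike.coe_injective h⟩

theorem continuous_mul_const_aut (w : α ≃o α) : Continuous fun g : α ≃o α => g * w := by
  refine isEmbedding_autToEnd.continuous_iff.mpr <| continuous_funTop_iff.mpr fun a b => ?_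
  exact (isOpen_setOf_apply_eq (w a) b).preimage isEmbedding_autToEnd.continuous

def autMulRight (w : α ≃o α) : (α ≃o α) ≃ₜ (α ≃o α) where
  toEquiv := Equiv.mulRight w
  continuous_toFun := continuous_mul_const_aut w
  continuous_invFun := continuous_mul_const_aut w⁻¹

theorem baireSpace_aut [Countable α] [DenselyOrdered α] [NoMinOrder α] [NoMaxOrder α]
    [Nonempty α] : BaireSpace (α ≃o α) := by
  let S := {v : Function.End α | StrictMono v}
  have : PolishSpace S := isClosed_setOf_strictMono.polishSpace
  let T : Set S := {v | Function.Surjective v.1}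
  have hTδ : IsGδ T := isGδ_setOf_surjective.preimage continuous_subtype_val
  have hTdense : Dense T := fun v => by
    refine (mem_closure_iff_nhds_basis <| nhds_subtype S v ▸
      (nhds_funTop_hasBasis v.1).comap Subtype.val).mpr fun K _ => ?_
    obtain ⟨g, hg⟩ := exists_orderIso_eqOn_of_strictMono K v.2
    exact ⟨⟨autToEnd g, g.strictMono⟩, g.surjective, hg⟩
  have : BaireSpace T := hTδ.baireSpace_of_dense hTdense
  let p : (α ≃o α) → T := fun g => ⟨⟨autToEnd g, g.strictMono⟩, g.surjective⟩
  have hp : IsEmbedding p :=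
    (IsEmbedding.subtypeVal.comp IsEmbedding.subtypeVal).of_comp_iff.mp isEmbedding_autToEnd
  refine (hp.isOpenEmbedding_of_surjective fun v => ?_).baireSpace
  exact ⟨StrictMono.orderIsoOfSurjective v.1.1 v.1.2 v.2, rfl⟩

theorem eventually_comap_autToEnd_nhds (K : Finset α) (v : Function.End α) :
    ∀ᶠ g in comap autToEnd (𝓝 v), ∀ a ∈ K, g a = v a :=
  preimage_mem_comap <| (isOpen_setOf_eqOn K v).mem_nhds fun _ _ => rfl

theorem neBot_comap_autToEnd_nhds [Countable α] [DenselyOrdered α] [NoMinOrder α]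
    [NoMaxOrder α] [Nonempty α] {v : Function.End α} (hv : StrictMono v) :
    (comap autToEnd (𝓝 v)).NeBot := by
  refine comap_neBot fun t ht => ?_
  obtain ⟨K, -, hK⟩ := (nhds_funTop_hasBasis v).mem_iff.mp ht
  obtain ⟨g, hg⟩ := exists_orderIso_eqOn_of_strictMono K hv
  exact ⟨g, hK hg⟩

end Automorphisms

attribute [local instance] autTop baireSpace_aut

def autToM : (ℚ ≃o ℚ) →* Mmon where
  toFun g := ⟨autToEnd g, g.strictMono⟩
  map_one' := rfl
  map_mul' _ _ := rfl

section Theta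

variable {Ω : Type} {E' : Submonoid (Function.End Ω)} (θ : Emon ≃* E')

def constE (q : ℚ) : Emon := ⟨(fun _ => q : ℚ → ℚ), monotone_const⟩

def psi (x₀ : Ω) (q : ℚ) : Ω := (θ (constE q) : Function.End Ω) x₀

theorem theta_apply_psi (x₀ : Ω) (g : Emon) (q : ℚ) :
    (θ g : Function.End Ω) (psi θ x₀ q) = psi θ x₀ ((g : Function.End ℚ) q) := by
  have h : g * constE q = constE ((g : Function.End ℚ) q) := rfl
  change ((θ g * θ (constE q) : E') : Function.End Ω) x₀ = _
  rw [← map_mul, h]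
  rfl

theorem psi_injective_of_ne {x₀ : Ω} (h : psi θ x₀ 0 ≠ psi θ x₀ 1) :
    Function.Injective (psi θ x₀) := by
  suffices hlt : ∀ p r : ℚ, p < r → psi θ x₀ p ≠ psi θ x₀ r by
    intro p r hpr
    by_contra hne
    rcases lt_or_gt_of_ne hne with hlt' | hlt'
    exacts [hlt p r hlt' hpr, hlt r p hlt' hpr.symm]
  intro p r hpr hψ
  let step : Emon := ⟨(fun q => if q ≤ p then 0 else 1 : ℚ → ℚ), fun a b hab => by
    dsimp only
    split_ifs <;> linarith⟩
  apply h
  have h0 := theta_apply_psi θ x₀ step p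
  have h1 := theta_apply_psi θ x₀ step r
  simp only [step, le_refl, if_true, not_le.mpr hpr, if_false] at h0 h1
  rw [← h0, ← h1, hψ]

theorem exists_psi_injective : ∃ x₀ : Ω, Function.Injective (psi θ x₀) := by
  have h : (θ (constE 0) : Function.End Ω) ≠ θ (constE 1) := fun h =>
    zero_ne_one (congrFun (congrArg Subtype.val (θ.injective (Subtype.ext h))) 0 : (0 : ℚ) = 1)
  obtain ⟨x₀, hx₀⟩ := Function.ne_iff.mp h
  exact ⟨x₀, psi_injective_of_ne θ hx₀⟩

def thetaAut : (ℚ ≃o ℚ) →* E' := (θ : Emon →* E').comp (MtoE.comp autToM)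

variable {θ}

theorem theta_symm_thetaAut (g : ℚ ≃o ℚ) :
    (θ.symm (thetaAut θ g) : Function.End ℚ) = autToEnd g := by
  change (θ.symm (θ (MtoE (autToM g))) : Function.End ℚ) = _
  rw [θ.symm_apply_apply]
  rfl

theorem thetaAut_mul_apply (g h : ℚ ≃o ℚ) (z : Ω) :
    (thetaAut θ (g * h) : Function.End Ω) z =
      (thetaAut θ g : Function.End Ω) ((thetaAut θ h : Function.End Ω) z) := by
  rw [map_mul]
  rfl

variable {x₀ : Ω} (hψ : Function.Injective (psi θ x₀))
include hψ

theorem theta_apply_psi_eq_psi_iff (g : Emon) (q r : ℚ) :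
    (θ g : Function.End Ω) (psi θ x₀ q) = psi θ x₀ r ↔ (g : Function.End ℚ) q = r := by
  rw [theta_apply_psi]
  exact hψ.eq_iff

theorem continuous_theta_symm :
    Continuous fun u : E' => (θ.symm u : Function.End ℚ) := by
  refine continuous_funTop_iff.mpr fun q r => ?_
  have h : {u : E' | (θ.symm u : Function.End ℚ) q = r} =
      Subtype.val ⁻¹' {v : Function.End Ω | v (psi θ x₀ q) = psi θ x₀ r} := by
    ext u
    simpa using (theta_apply_psi_eq_psi_iff hψ (θ.symm u) q r).symm
  rw [h]
  exact (isOpen_setOf_apply_eq _ _).preimage continuous_subtype_val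

variable (hE' : IsClosed (E' : Set (Function.End Ω)))
include hE'

theorem isClosed_setOf_theta_M :
    IsClosed {y : Function.End Ω | ∃ f : Mmon, (θ (MtoE f) : Function.End Ω) = y} := by
  have h : {y : Function.End Ω | ∃ f : Mmon, (θ (MtoE f) : Function.End Ω) = y} =
      Subtype.val ''
        ((fun u : E' => (θ.symm u : Function.End ℚ)) ⁻¹' {v | StrictMono v}) := by
    ext y
    constructor
    · rintro ⟨f, rfl⟩
      refine ⟨θ (MtoE f), ?_, rfl⟩
      rw [mem_preimage, θ.symm_apply_apply]
      exact f.2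
    · rintro ⟨u, hu, rfl⟩
      exact ⟨⟨_, hu⟩, congrArg Subtype.val (θ.apply_symm_apply u)⟩
  rw [h]
  exact hE'.isClosedMap_subtype_val _
    (isClosed_setOf_strictMono.preimage (continuous_theta_symm hψ))

variable [Countable Ω]

theorem baireMeasurableSet_setOf_thetaAut_apply_eq (x y : Ω) :
    BaireMeasurableSet {g : ℚ ≃o ℚ | (thetaAut θ g : Function.End Ω) x = y} := by
  borelize (ℚ ≃o ℚ) (Function.End ℚ) (↥E')
  have : PolishSpace E' := hE'.polishSpace
  have hj : MeasurableEmbedding fun u : E' => (θ.symm u : Function.End ℚ) :=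
    (continuous_theta_symm hψ).measurableEmbedding
      (Subtype.val_injective.comp θ.symm.injective)
  have h : {g : ℚ ≃o ℚ | (thetaAut θ g : Function.End Ω) x = y} = autToEnd ⁻¹'
      ((fun u : E' => (θ.symm u : Function.End ℚ)) '' {u | (u : Function.End Ω) x = y}) := by
    ext g
    constructor
    · intro hg
      exact ⟨thetaAut θ g, hg, theta_symm_thetaAut g⟩
    · rintro ⟨u, hu, hug⟩
      change (thetaAut θ g : Function.End Ω) x = y
      rwa [← hj.injective (hug.trans (theta_symm_thetaAut g).symm)]
  rw [h]
  refine (isEmbedding_autToEnd.continuous.measurable (hj.measurableSet_image.mpr ?_))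
    |>.baireMeasurableSet
  exact ((isOpen_setOf_apply_eq x y).preimage continuous_subtype_val).measurableSet

theorem exists_finset_thetaAut_apply_eq_self (x : Ω) :
    ∃ K : Finset ℚ, ∀ w : ℚ ≃o ℚ, (∀ a ∈ K, w a = a) →
      (thetaAut θ w : Function.End Ω) x = x := by
  let A : Ω → Set (ℚ ≃o ℚ) := fun y => {g | (thetaAut θ g : Function.End Ω) x = y}
  obtain ⟨y, hy⟩ : ∃ y, ¬ IsMeagre (A y) := by
    by_contra! h
    have hcover : ⋃ y, A y = univ := iUnion_eq_univ_iff.mpr fun g => ⟨_, rfl⟩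
    exact not_isMeagre_of_isOpen isOpen_univ univ_nonempty (hcover ▸ isMeagre_iUnion h)
  obtain ⟨U, hUo, hAU⟩ :=
    (baireMeasurableSet_setOf_thetaAut_apply_eq hψ hE' x y).residualEq_isOpen
  obtain ⟨z₀, hz₀⟩ : U.Nonempty := by
    refine nonempty_iff_ne_empty.mpr fun hU => hy ?_
    filter_upwards [hAU.mem_iff] with g hg
    simpa [A, hU] using hg
  obtain ⟨K, -, hK⟩ := ((nhds_funTop_hasBasis (autToEnd z₀)).comap autToEnd).mem_iff.mp <|
    isEmbedding_autToEnd.isInducing.nhds_eq_comap z₀ ▸ hUo.mem_nhds hz₀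
  refine ⟨K, fun w hw => ?_⟩
  have hmaps : MapsTo (autMulRight w⁻¹) (autToEnd ⁻¹' {u | ∀ a ∈ K, u a = z₀ a})
      (autToEnd ⁻¹' {u | ∀ a ∈ K, u a = z₀ a}) := fun g hg a ha => by
    have hwa : w⁻¹ a = a := by
      conv_lhs => rw [← hw a ha]
      exact RelIso.inv_apply_self w a
    exact (congrArg g hwa).trans (hg a ha)
  obtain ⟨z, hz, hzw⟩ := exists_mem_and_apply_mem_of_residualEq hAU
    ((isOpen_setOf_eqOn K _).preimage isEmbedding_autToEnd.continuous) ⟨z₀, fun _ _ => rfl⟩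
    hK (autMulRight w⁻¹) hmaps
  -- `z` and `z * w⁻¹` both send `x` to `y`; cancel `θ (z * w⁻¹)`, which is invertible.
  calc (thetaAut θ w : Function.End Ω) x
      = (thetaAut θ ((z * w⁻¹)⁻¹ * z) : Function.End Ω) x := by
        rw [show (z * w⁻¹)⁻¹ * z = w by group]
    _ = (thetaAut θ (z * w⁻¹)⁻¹ : Function.End Ω)
          ((thetaAut θ (z * w⁻¹) : Function.End Ω) x) := by
        rw [thetaAut_mul_apply, hz]
        exact congrArg _ hzw.symm
    _ = x := by
        rw [← thetaAut_mul_apply, inv_mul_cancel, map_one]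
        rfl

theorem exists_finset_thetaAut_apply_eq (x : Ω) :
    ∃ K : Finset ℚ, ∀ g g' : ℚ ≃o ℚ, (∀ a ∈ K, g a = g' a) →
      (thetaAut θ g : Function.End Ω) x = (thetaAut θ g' : Function.End Ω) x := by
  obtain ⟨K, hK⟩ := exists_finset_thetaAut_apply_eq_self hψ hE' x
  refine ⟨K, fun g g' hgg' => ?_⟩
  have hfix : ∀ a ∈ K, (g'⁻¹ * g) a = a := fun a ha => by
    rw [RelIso.mul_apply, hgg' a ha, RelIso.inv_apply_self]
  rw [show g = g' * (g'⁻¹ * g) by group, thetaAut_mul_apply, hK _ hfix]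

/-- The pointwise limit of the `θ(g)` lies in the closed set `E'`, and `θ⁻¹` of it is `f` by
continuity of `θ⁻¹`. -/
theorem tendsto_thetaAut_comap_nhds (f : Mmon) :
    Tendsto (fun g => (thetaAut θ g : Function.End Ω))
      (comap autToEnd (𝓝 (f : Function.End ℚ))) (𝓝 (θ (MtoE f) : Function.End Ω)) := by
  set l := comap autToEnd (𝓝 (f : Function.End ℚ))
  have : l.NeBot := neBot_comap_autToEnd_nhds f.2
  have hconst : ∀ z, ∃ c, ∀ᶠ g in l, (thetaAut θ g : Function.End Ω) z = c := fun z => by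
    obtain ⟨K, hK⟩ := exists_finset_thetaAut_apply_eq hψ hE' z
    have hf := eventually_comap_autToEnd_nhds K (f : Function.End ℚ)
    obtain ⟨g₀, hg₀⟩ := hf.exists
    exact ⟨_, hf.mono fun g hg => hK g g₀ fun a ha => (hg a ha).trans (hg₀ a ha).symm⟩
  choose L hL using hconst
  have hlim : Tendsto (fun g => (thetaAut θ g : Function.End Ω)) l (𝓝 L) :=
    tendsto_funTop_iff.mpr hL
  have hLE : L ∈ E' := hE'.mem_of_tendsto hlim (.of_forall fun g => (thetaAut θ g).2)
  have hsymm : (θ.symm ⟨L, hLE⟩ : Function.End ℚ) = f := by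
    refine tendsto_nhds_unique (((continuous_theta_symm hψ).tendsto _).comp
      (tendsto_subtype_rng.mpr hlim)) ?_
    simpa only [Function.comp_def, theta_symm_thetaAut] using tendsto_comap
  rwa [show MtoE f = θ.symm ⟨L, hLE⟩ from Subtype.ext hsymm.symm, θ.apply_symm_apply]

theorem exists_finset_theta_M_apply_eq (x : Ω) :
    ∃ K : Finset ℚ, ∀ f f' : Mmon,
      (∀ a ∈ K, (f : Function.End ℚ) a = (f' : Function.End ℚ) a) →
        (θ (MtoE f) : Function.End Ω) x = (θ (MtoE f') : Function.End Ω) x := by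
  obtain ⟨K, hK⟩ := exists_finset_thetaAut_apply_eq hψ hE' x
  have happrox : ∀ f : Mmon, ∃ g : ℚ ≃o ℚ,
      (∀ a ∈ K, g a = (f : Function.End ℚ) a) ∧
        (thetaAut θ g : Function.End Ω) x = (θ (MtoE f) : Function.End Ω) x := fun f =>
    have : (comap autToEnd (𝓝 (f : Function.End ℚ))).NeBot := neBot_comap_autToEnd_nhds f.2
    ((eventually_comap_autToEnd_nhds K _).and
      (tendsto_funTop_iff.mp (tendsto_thetaAut_comap_nhds hψ hE' f) x)).exists
  refine ⟨K, fun f f' hff' => ?_⟩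
  obtain ⟨g, hgf, hg⟩ := happrox f
  obtain ⟨g', hgf', hg'⟩ := happrox f'
  rw [← hg, ← hg']
  exact hK g g' fun a ha => (hgf a ha).trans ((hff' a ha).trans (hgf' a ha).symm)

theorem continuous_theta_M : Continuous fun f : Mmon => θ (MtoE f) := by
  refine continuous_induced_rng.mpr <| continuous_funTop_iff.mpr fun x y => ?_
  refine isOpen_iff_mem_nhds.mpr fun f₀ hf₀ => ?_
  obtain ⟨K, hK⟩ := exists_finset_theta_M_apply_eq hψ hE' x
  exact mem_of_superset (((isOpen_setOf_eqOn K _).preimage continuous_subtype_val).mem_nhds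
    fun _ _ => rfl) fun f hf => (hK f f₀ hf).trans hf₀

theorem isEmbedding_theta_M :
    IsEmbedding fun f : Mmon => (θ (MtoE f) : Function.End Ω) := by
  have hcomp : (fun u : E' => (θ.symm u : Function.End ℚ)) ∘ (fun f : Mmon => θ (MtoE f)) =
      Subtype.val := funext fun f => congrArg Subtype.val (θ.symm_apply_apply (MtoE f))
  refine IsEmbedding.subtypeVal.comp ⟨?_, ?_⟩
  · exact .of_comp (continuous_theta_M hψ hE') (continuous_theta_symm hψ)
      (hcomp ▸ IsInducing.subtypeVal)
  · exact .of_comp (hcomp ▸ Subtype.val_injective)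

end Theta

/-- **Lemma 4.0 (Lemma 4.1 in the paper's numbering).** If `θ : E → E'` is a monoid
isomorphism onto a closed submonoid `E'` of `Tr(Ω)`, `Ω` countable, then `M' = θ(M)`
is closed in `Tr(Ω)` and the restriction `θ↾M : M → M'` is a homeomorphism (that is,
`θ ∘ (M ↪ E)` is a topological embedding of `M` into `Tr(Ω)` with range `M'`). -/
theorem restriction_to_M_is_closed_homeomorphism (Ω : Type) [Countable Ω]
    (E' : Submonoid (Function.End Ω))
    (hE' : @IsClosed _ (funTop Ω) (E' : Set (Function.End Ω)))
    (θ : Emon ≃* E') :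
    @IsClosed _ (funTop Ω)
      {y : Function.End Ω | ∃ f : Mmon, (θ (MtoE f) : Function.End Ω) = y} ∧
    @Topology.IsEmbedding _ _ (monTop Mmon) (funTop Ω)
      (fun f : Mmon => (θ (MtoE f) : Function.End Ω)) ∧
    Set.range (fun f : Mmon => (θ (MtoE f) : Function.End Ω)) =
      {y : Function.End Ω | ∃ f : Mmon, (θ (MtoE f) : Function.End Ω) = y} := by
  obtain ⟨x₀, hψ⟩ := exists_psi_injective θ
  exact ⟨isClosed_setOf_theta_M hψ hE', isEmbedding_theta_M hψ hE', rfl⟩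
end

section
/- Let A and B be sets, let P and P' be clones on A and B respectively, and let θ : P → P' be a clone homomorphism. If for every b ∈ B there is a unary operation h ∈ P with finite image such that θ(h)(b) = b, then θ is continuous (on each n-ary part, with respect to the topologies of pointwise convergence). -/
/-- The type of `(n+1)`-ary operations on `A` (arities are `≥ 1`). -/
abbrev Ops (A : Type*) (n : ℕ) : Type _ := (Fin (n + 1) → A) → A

/-- The topology of pointwise convergence on `(n+1)`-ary operations
(the codomain taken discrete). -/
def opsTop (A : Type*) (n : ℕ) : TopologicalSpace (Ops A n) :=
  @Pi.topologicalSpace (Fin (n + 1) → A) (fun _ => A) (fun _ => ⊥)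

/-- A (concrete) clone on `A`: a family of sets of `(n+1)`-ary operations containing all
projections and closed under composition. -/
structure IsClone {A : Type*} (C : ∀ n : ℕ, Set (Ops A n)) : Prop where
  proj_mem : ∀ (n : ℕ) (i : Fin (n + 1)), (fun x => x i) ∈ C n
  comp_mem : ∀ (n m : ℕ) (f : Ops A n) (g : Fin (n + 1) → Ops A m),
    f ∈ C n → (∀ i, g i ∈ C m) → (fun x => f (fun i => g i x)) ∈ C m

/-- A clone homomorphism from the clone `C` on `A` to the clone `D` on `B`: it maps
`n`-ary members of `C` to `n`-ary members of `D`, sends each projection to the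
corresponding projection and preserves composition. (It is recorded as a family of
total maps on operations; only its values on members of `C` matter.) -/
structure IsCloneHom {A B : Type*} (C : ∀ n : ℕ, Set (Ops A n)) (D : ∀ n : ℕ, Set (Ops B n))
    (θ : ∀ n : ℕ, Ops A n → Ops B n) : Prop where
  maps_mem : ∀ (n : ℕ) (f : Ops A n), f ∈ C n → θ n f ∈ D n
  map_proj : ∀ (n : ℕ) (i : Fin (n + 1)), θ n (fun x => x i) = fun x => x i
  map_comp : ∀ (n m : ℕ) (f : Ops A n) (g : Fin (n + 1) → Ops A m),
    f ∈ C n → (∀ i, g i ∈ C m) →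
    θ m (fun x => f (fun i => g i x)) = fun x => θ n f (fun i => θ m (g i) x)

/-- **Lemma 5.1.** Let `P`, `P'` be clones on sets `A`, `B` and `θ : P → P'` a clone
homomorphism. If for every `b ∈ B` there is a unary `h ∈ P` with finite image such
that `θ(h)(b) = b`, then `θ` is continuous (on each `n`-ary part, with respect to the
topologies of pointwise convergence). -/
theorem cloneHom_continuous_of_unary_finite_image {A B : Type*}
    (P : ∀ n : ℕ, Set (Ops A n)) (P' : ∀ n : ℕ, Set (Ops B n))
    (hP : IsClone P) (hP' : IsClone P')
    (θ : ∀ n : ℕ, Ops A n → Ops B n) (hθ : IsCloneHom P P' θ)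
    (hfin : ∀ b : B, ∃ h : Ops A 0, h ∈ P 0 ∧ (Set.range h).Finite ∧
      θ 0 h (fun _ => b) = b) :
    ∀ n : ℕ, @Continuous {f : Ops A n // f ∈ P n} (Ops B n)
      ((opsTop A n).induced Subtype.val) (opsTop B n) (fun f => θ n f.1) := by
  intro n
  letI tA : TopologicalSpace A := ⊥
  letI tB : TopologicalSpace B := ⊥
  haveI : DiscreteTopology A := ⟨rfl⟩
  haveI : DiscreteTopology B := ⟨rfl⟩
  show Continuous (fun f : {f : Ops A n // f ∈ P n} => θ n f.1)
  apply continuous_pi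
  intro b
  refine IsLocallyConstant.continuous ?_
  rw [IsLocallyConstant.iff_exists_open]
  intro f0
  choose h hmem hfinr hθh using fun i : Fin (n + 1) => hfin (b i)
  -- the key computation lemma
  have key : ∀ f : Ops A n, f ∈ P n →
      θ n (fun x => f (fun i => h i (fun _ => x i))) b = θ n f b := by
    intro f hf
    set g : Fin (n + 1) → Ops A n := fun i => fun x => h i (fun _ => x i) with hg
    have gmem : ∀ i, g i ∈ P n := fun i =>
      hP.comp_mem 0 n (h i) (fun _ => fun x => x i) (hmem i) (fun _ => hP.proj_mem n i)
    have hcomp := hθ.map_comp n n f g hf gmem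
    have hgb : ∀ i, θ n (g i) b = b i := by
      intro i
      have hc := hθ.map_comp 0 n (h i) (fun _ => fun x => x i) (hmem i)
        (fun _ => hP.proj_mem n i)
      have : θ n (g i) = fun x => θ 0 (h i) (fun _ => θ n (fun y => y i) x) := hc
      rw [this, hθ.map_proj n i]
      exact hθh i
    calc θ n (fun x => f (fun i => h i (fun _ => x i))) b
        = θ n f (fun i => θ n (g i) b) := congrFun hcomp b
      _ = θ n f b := by
          congr 1; funext i; exact hgb i
  -- the finite set of arguments determining the behaviour
  set S : Set (Fin (n + 1) → A) := Set.pi Set.univ fun i => Set.range (h i) with hS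
  have hSfin : S.Finite := Set.Finite.pi fun i => hfinr i
  refine ⟨{g' : {f : Ops A n // f ∈ P n} | ∀ x ∈ S, g'.1 x = f0.1 x}, ?_, ?_, ?_⟩
  · have heq : {g' : {f : Ops A n // f ∈ P n} | ∀ x ∈ S, g'.1 x = f0.1 x}
        = ⋂ x ∈ S, (fun g' : {f : Ops A n // f ∈ P n} => g'.1 x) ⁻¹' {f0.1 x} := by
      ext g'; simp [Set.mem_iInter]
    rw [heq]
    exact hSfin.isOpen_biInter fun x _ =>
      ((continuous_apply x).comp continuous_subtype_val).isOpen_preimage _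
        (isOpen_discrete _)
  · intro x _; rfl
  · intro g' hg'
    have hFG : (fun x : Fin (n + 1) → A => g'.1 (fun i => h i (fun _ => x i)))
        = (fun x : Fin (n + 1) → A => f0.1 (fun i => h i (fun _ => x i))) := by
      funext x
      exact hg' _ (fun i _ => ⟨_, rfl⟩)
    calc θ n g'.1 b = θ n (fun x => g'.1 (fun i => h i (fun _ => x i))) b :=
          (key g'.1 g'.2).symm
      _ = θ n (fun x => f0.1 (fun i => h i (fun _ => x i))) b := by rw [hFG]
      _ = θ n f0.1 b := key f0.1 f0.2
end

section
/- If A is a countable set and E ⊆ Tr(A) is a topologically closed transformation monoid with automatic continuity (every monoid homomorphism from E to Tr(Ω), for any countable set Ω, is continuous), then the clone ⟨E⟩ generated by E also has automatic continuity: every clone homomorphism from ⟨E⟩ to the clone O_Ω of all finitary operations on a countable set Ω is continuous. -/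
/-- The clone `⟨E⟩` generated by a transformation monoid `E ⊆ Tr(A)`, consisting of all
operations `f ∘ πᵢⁿ` with `f ∈ E`. -/
def genClone {A : Type*} (E : Set (Function.End A)) : ∀ n : ℕ, Set (Ops A n) :=
  fun n => {F | ∃ (i : Fin (n + 1)) (f : Function.End A), f ∈ E ∧ F = fun x => f (x i)}

/-! On unary operations a clone homomorphism `θ` from `⟨E⟩` is a monoid homomorphism
`φ : E → Tr(Ω)`, and `θ (f ∘ πᵢ) = φ f ∘ πᵢ`. So continuity of `θ` at `f₀ ∘ πᵢ₀` reduces to that of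
`φ` at `f₀`, once every operation of `⟨E⟩` close to `f₀ ∘ πᵢ₀` is written as `g ∘ πⱼ` with `g`
close to `f₀` and `f₀ ∘ πⱼ = f₀ ∘ πᵢ₀`: agreement on finitely many constant tuples makes `g` close
to `f₀`, and if `f₀` is not constant one more tuple forces `j = i₀`. -/

open Filter Topology

theorem mem_nhds_pi_discrete_iff {ι X : Type*} [TopologicalSpace X] [DiscreteTopology X]
    {U : Set (ι → X)} {x : ι → X} :
    U ∈ 𝓝 x ↔ ∃ I : Set ι, I.Finite ∧ {y | Set.EqOn y x I} ⊆ U := by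
  rw [nhds_pi, Filter.mem_pi]
  simp only [nhds_discrete, Filter.mem_pure]
  constructor
  · rintro ⟨I, hI, t, ht, hsub⟩
    exact ⟨I, hI, fun y hy => hsub fun i hi => hy hi ▸ ht i⟩
  · rintro ⟨I, hI, hsub⟩
    exact ⟨I, hI, fun i => {x i}, fun _ => rfl, hsub⟩

theorem Continuous.exists_finite_eqOn_imp_eqOn {ι X κ Y : Type*} [TopologicalSpace X]
    [DiscreteTopology X] [TopologicalSpace Y] [DiscreteTopology Y] {s : Set (ι → X)}
    {Φ : s → κ → Y} (hΦ : Continuous Φ) (x : s) {K : Set κ} (hK : K.Finite) :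
    ∃ I : Set ι, I.Finite ∧ ∀ y : s, Set.EqOn y.1 x.1 I → Set.EqOn (Φ y) (Φ x) K := by
  have hev : ∀ᶠ y in 𝓝 x, ∀ k ∈ K, Φ y k = Φ x k :=
    (eventually_all_finite hK).2 fun k _ =>
      ((continuous_apply k).comp hΦ).continuousAt.eventually_mem
        ((isOpen_discrete {Φ x k}).mem_nhds rfl)
  obtain ⟨U, hU, hUsub⟩ := mem_nhds_subtype .. |>.1 hev
  obtain ⟨I, hI, hIU⟩ := mem_nhds_pi_discrete_iff.1 hU
  exact ⟨I, hI, fun y hy => hUsub (hIU hy)⟩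

theorem exists_finite_tuples_forcing_index {A : Type*} {n : ℕ} (f₀ : A → A) (i₀ : Fin (n + 1))
    {S : Set A} (hS : S.Finite) :
    ∃ T : Set (Fin (n + 1) → A), T.Finite ∧ ∀ (g : A → A) (j : Fin (n + 1)),
      (∀ x ∈ T, g (x j) = f₀ (x i₀)) →
        Set.EqOn g f₀ S ∧ ∀ x : Fin (n + 1) → A, f₀ (x j) = f₀ (x i₀) := by
  by_cases hconst : ∀ a b, f₀ a = f₀ b
  · exact ⟨(fun c _ => c) '' S, hS.image _, fun g j hT =>
      ⟨fun c hc => hT _ ⟨c, hc, rfl⟩, fun _ => hconst _ _⟩⟩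
  simp only [not_forall] at hconst
  obtain ⟨a, b, hab⟩ := hconst
  -- a tuple on which `f₀ ∘ πᵢ₀` and `g ∘ πⱼ` can only agree when `j = i₀`
  set xs : Fin (n + 1) → A := Function.update (fun _ => b) i₀ a
  refine ⟨insert xs ((fun c _ => c) '' insert b S), ((hS.insert b).image _).insert xs, ?_⟩
  intro g j hT
  have hgS : Set.EqOn g f₀ (insert b S) := fun c hc => hT _ (.inr ⟨c, hc, rfl⟩)
  obtain rfl : j = i₀ := by
    by_contra hne
    have hxs := hT xs (.inl rfl)
    simp only [xs, Function.update_self, Function.update_of_ne hne, hgS (.inl rfl)] at hxs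
    exact hab hxs.symm
  exact ⟨hgS.mono (Set.subset_insert b S), fun _ => rfl⟩

namespace IsCloneHom

variable {A Ω : Type*} {E : Submonoid (Function.End A)} {θ : ∀ n : ℕ, Ops A n → Ops Ω n}

theorem comp_proj_mem_genClone {f : Function.End A} (hf : f ∈ E) (n : ℕ) (i : Fin (n + 1)) :
    (fun x : Fin (n + 1) → A => f (x i)) ∈ genClone (E : Set (Function.End A)) n :=
  ⟨i, f, hf, rfl⟩

def toEndMonoidHom (hθ : IsCloneHom (genClone (E : Set (Function.End A))) (fun _ => Set.univ) θ) :
    E →* Function.End Ω where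
  toFun f ω := θ 0 (fun x => f.1 (x 0)) fun _ => ω
  map_one' := funext fun _ => congrFun (hθ.map_proj 0 0) _
  map_mul' f g := funext fun _ => congrFun (hθ.map_comp 0 0 _ (fun _ x => g.1 (x 0))
    (comp_proj_mem_genClone f.2 0 0) fun _ => comp_proj_mem_genClone g.2 0 0) _

theorem map_comp_proj (hθ : IsCloneHom (genClone (E : Set (Function.End A))) (fun _ => Set.univ) θ)
    (f : E) {m : ℕ} (i : Fin (m + 1)) (w : Fin (m + 1) → Ω) :
    θ m (fun x => f.1 (x i)) w = hθ.toEndMonoidHom f (w i) := by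
  have h := congrFun (hθ.map_comp 0 m (fun x => f.1 (x 0)) (fun _ x => x i)
    (comp_proj_mem_genClone f.2 0 0) fun _ => comp_proj_mem_genClone E.one_mem m i) w
  simp only [hθ.map_proj] at h
  exact h

end IsCloneHom

theorem genClone_automatic_continuity_general {A : Type}
    (E : Submonoid (Function.End A))
    (hac : ∀ (Ω : Type) [Countable Ω] (φ : E →* Function.End Ω),
      @Continuous _ _ (monTop E) (funTop Ω) φ) :
    ∀ (Ω : Type) [Countable Ω] (θ : ∀ n : ℕ, Ops A n → Ops Ω n),
      IsCloneHom (genClone (E : Set (Function.End A))) (fun _ => Set.univ) θ →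
      ∀ n : ℕ, @Continuous {F : Ops A n // F ∈ genClone (E : Set (Function.End A)) n}
        (Ops Ω n) ((opsTop A n).induced Subtype.val) (opsTop Ω n) (fun F => θ n F.1) := by
  intro Ω _ θ hθ n
  let _ : TopologicalSpace A := ⊥
  let _ : TopologicalSpace Ω := ⊥
  have _ : DiscreteTopology A := ⟨rfl⟩
  have _ : DiscreteTopology Ω := ⟨rfl⟩
  have hφ : @Continuous {f : A → A // f ∈ E} (Ω → Ω) _ _ (hθ.toEndMonoidHom ·) := hac Ω _
  refine continuous_pi fun w => IsLocallyConstant.continuous <|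
    (IsLocallyConstant.iff_eventually_eq _).2 ?_
  rintro ⟨_, i₀, f₀, hf₀, rfl⟩
  obtain ⟨S, hS, hφS⟩ := hφ.exists_finite_eqOn_imp_eqOn ⟨f₀, hf₀⟩ (Set.finite_range w)
  obtain ⟨T, hT, hTforce⟩ := exists_finite_tuples_forcing_index f₀ i₀ hS
  have hnhds : {G : Ops A n | ∀ x ∈ T, G x = f₀ (x i₀)} ∈ 𝓝 fun x => f₀ (x i₀) :=
    mem_nhds_pi_discrete_iff.2 ⟨T, hT, subset_rfl⟩
  filter_upwards [(mem_nhds_induced Subtype.val _ _).2 ⟨_, hnhds, subset_rfl⟩]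
  rintro ⟨_, j, g, hg, rfl⟩ hagree
  obtain ⟨hgS, hindex⟩ := hTforce g j hagree
  calc θ n (fun x => g (x j)) w
      = hθ.toEndMonoidHom ⟨g, hg⟩ (w j) := hθ.map_comp_proj ⟨g, hg⟩ j w
    _ = hθ.toEndMonoidHom ⟨f₀, hf₀⟩ (w j) := hφS ⟨g, hg⟩ hgS ⟨j, rfl⟩
    _ = θ n (fun x => f₀ (x j)) w := (hθ.map_comp_proj ⟨f₀, hf₀⟩ j w).symm
    _ = θ n (fun x => f₀ (x i₀)) w := by simp only [hindex]

/-- **Corollary 6.4.** If `A` is countable and `E ⊆ Tr(A)` is a closed transformation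
monoid with automatic continuity (every monoid homomorphism from `E` to `Tr(Ω)`, `Ω`
countable, is continuous), then the clone `⟨E⟩` generated by `E` has automatic
continuity: every clone homomorphism from `⟨E⟩` to the clone `O_Ω` of all operations
on a countable set `Ω` is continuous. -/
theorem genClone_automatic_continuity {A : Type} [Countable A]
    (E : Submonoid (Function.End A))
    (hE : @IsClosed _ (funTop A) (E : Set (Function.End A)))
    (hac : ∀ (Ω : Type) [Countable Ω] (φ : E →* Function.End Ω),
      @Continuous _ _ (monTop E) (funTop Ω) φ) :
    ∀ (Ω : Type) [Countable Ω] (θ : ∀ n : ℕ, Ops A n → Ops Ω n),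
      IsCloneHom (genClone (E : Set (Function.End A))) (fun _ => Set.univ) θ →
      ∀ n : ℕ, @Continuous {F : Ops A n // F ∈ genClone (E : Set (Function.End A)) n}
        (Ops Ω n) ((opsTop A n).induced Subtype.val) (opsTop Ω n) (fun F => θ n F.1) :=
  genClone_automatic_continuity_general E hac
end
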